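/- arXiv:2501.07961 — 5 statements merged into one kernel-verified Lean document; each statement's English description precedes it below -/
import Mathlib

section
/- Let δ be a diagonal section of a lower semilinear copula (so δ(x)/x is non-decreasing and δ(x)/x² is non-increasing on (0,1]). If the set {x ∈ (0,1] : δ is differentiable at x and 1/x < δ'(x)/δ(x) < 2/x} has positive Lebesgue measure, then δ is not an extreme point of the convex set of diagonal sections of semilinear copulas; i.e., there exist two distinct such diagonal sections δ₁ ≠ δ₂ with δ = (δ₁+δ₂)/2. -/
open MeasureTheory

def IsDiagonal (d : ℝ → ℝ) : Prop :=
  d 0 = 0 ∧ d 1 = 1 ∧ MonotoneOn d (Set.Icc 0 1) ∧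
  (∀ t ∈ Set.Icc (0:ℝ) 1, d t ≤ t) ∧
  (∀ s ∈ Set.Icc (0:ℝ) 1, ∀ t ∈ Set.Icc (0:ℝ) 1, |d s - d t| ≤ 2 * |s - t|)

def IsSemilinearDiagonal (d : ℝ → ℝ) : Prop :=
  IsDiagonal d ∧ MonotoneOn (fun x => d x / x) (Set.Ioc (0:ℝ) 1) ∧
  AntitoneOn (fun x => d x / x ^ 2) (Set.Ioc (0:ℝ) 1)


section ratios
variable {f : ℝ → ℝ}

lemma fx_le (h1 : f 1 = 1) (hg : MonotoneOn (fun x => f x / x) (Set.Ioc (0:ℝ) 1))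
    {x : ℝ} (hx : x ∈ Set.Ioc (0:ℝ) 1) : f x ≤ x := by
  have h := hg hx (Set.right_mem_Ioc.2 one_pos) hx.2
  simp only [h1, div_one] at h
  exact (div_le_one hx.1).1 h

lemma sq_le_fx (h1 : f 1 = 1) (hh : AntitoneOn (fun x => f x / x ^ 2) (Set.Ioc (0:ℝ) 1))
    {x : ℝ} (hx : x ∈ Set.Ioc (0:ℝ) 1) : x ^ 2 ≤ f x := by
  have h := hh hx (Set.right_mem_Ioc.2 one_pos) hx.2
  simp only [h1, one_pow, div_one] at h
  have := (one_le_div (pow_pos hx.1 2)).1 h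
  linarith [(one_le_div (pow_pos hx.1 2)).1 h, sq_nonneg x]

lemma sl_chain (h1 : f 1 = 1) (hg : MonotoneOn (fun x => f x / x) (Set.Ioc (0:ℝ) 1))
    (hh : AntitoneOn (fun x => f x / x ^ 2) (Set.Ioc (0:ℝ) 1)) :
    ∀ n : ℕ, ∀ x r : ℝ, x ∈ Set.Ioc (0:ℝ) 1 → 1 ≤ r → x * r ^ n ≤ 1 →
      f (x * r ^ n) - f x ≤ (r + 1) * (x * r ^ n - x) := by
  intro n
  induction n with
  | zero => intro x r hx hr h; simp
  | succ n ih =>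
    intro x r hx hr h
    have hx0 : 0 < x := hx.1
    have hr0 : (0:ℝ) < r := lt_of_lt_of_le one_pos hr
    have hxr0 : 0 < x * r := mul_pos hx0 hr0
    have hkey : x * r ≤ x * r ^ (n + 1) := by
      have h1n : r ≤ r ^ (n+1) := le_self_pow₀ (by linarith) (by omega)
      nlinarith
    have hxr1 : x * r ≤ 1 := le_trans hkey h
    have hxrIoc : x * r ∈ Set.Ioc (0:ℝ) 1 := ⟨hxr0, hxr1⟩
    have ih' := ih (x * r) r hxrIoc hr (by rw [mul_assoc, ← pow_succ']; exact h)
    have step : f (x * r) - f x ≤ (r + 1) * (x * r - x) := by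
      have hle : x ≤ x * r := by nlinarith
      have hmono := hh hx hxrIoc hle
      have hfx1 : f x ≤ x := fx_le h1 hg hx
      have hfx0 : 0 ≤ f x := le_trans (sq_nonneg x) (sq_le_fx h1 hh hx)
      have h2 : f (x * r) ≤ f x * r ^ 2 := by
        have hx2 : (0:ℝ) < x ^ 2 := pow_pos hx0 2
        have hxr2 : (0:ℝ) < (x * r) ^ 2 := pow_pos hxr0 2
        rw [div_le_div_iff₀ hxr2 hx2] at hmono
        nlinarith
      have hr21 : (0:ℝ) ≤ r ^ 2 - 1 := by nlinarith
      nlinarith [mul_le_mul_of_nonneg_right hfx1 hr21]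
    have : (x * r) * r ^ n = x * r ^ (n + 1) := by ring
    rw [this] at ih'
    nlinarith

lemma sl_lip (h1 : f 1 = 1) (hg : MonotoneOn (fun x => f x / x) (Set.Ioc (0:ℝ) 1))
    (hh : AntitoneOn (fun x => f x / x ^ 2) (Set.Ioc (0:ℝ) 1))
    {s t : ℝ} (hs : s ∈ Set.Ioc (0:ℝ) 1) (ht : t ∈ Set.Ioc (0:ℝ) 1) (hst : s ≤ t) :
    f t - f s ≤ 2 * (t - s) := by
  rcases eq_or_lt_of_le hst with rfl | hlt
  · simp
  set c : ℝ := t / s with hc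
  have hs0 : 0 < s := hs.1
  have hc1 : 1 < c := (one_lt_div hs0).2 hlt
  have hc0 : 0 < c := lt_trans one_pos hc1
  have key : ∀ n : ℕ, 1 ≤ n → f t - f s ≤ (c ^ ((n:ℝ))⁻¹ + 1) * (t - s) := by
    intro n hn
    have hn0 : (n:ℝ) ≠ 0 := Nat.cast_ne_zero.2 (by omega)
    set r : ℝ := c ^ ((n:ℝ))⁻¹ with hr
    have hr1 : 1 ≤ r := by
      have : c ^ (0:ℝ) ≤ c ^ ((n:ℝ))⁻¹ :=
        Real.rpow_le_rpow_of_exponent_le (le_of_lt hc1) (by positivity)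
      simpa using this
    have hpow : r ^ n = c := by
      rw [hr, ← Real.rpow_natCast (c ^ ((n:ℝ))⁻¹) n, ← Real.rpow_mul (le_of_lt hc0)]
      rw [inv_mul_cancel₀ hn0, Real.rpow_one]
    have hsrn : s * r ^ n = t := by
      rw [hpow, hc, mul_div_cancel₀ _ (ne_of_gt hs0)]
    have := sl_chain h1 hg hh n s r hs hr1 (by rw [hsrn]; exact ht.2)
    rw [hsrn] at this
    exact this
  have htend : Filter.Tendsto (fun n : ℕ => (c ^ ((n:ℝ))⁻¹ + 1) * (t - s))
      Filter.atTop (nhds (2 * (t - s))) := by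
    have h2 : Filter.Tendsto (fun n : ℕ => c ^ ((n:ℝ))⁻¹) Filter.atTop (nhds 1) := by
      have hrw : ∀ n : ℕ, c ^ ((n:ℝ))⁻¹ = Real.exp (Real.log c * ((n:ℝ))⁻¹) := by
        intro n; rw [Real.rpow_def_of_pos hc0]
      simp only [hrw]
      have hlim : Filter.Tendsto (fun n : ℕ => Real.log c * ((n:ℝ))⁻¹)
          Filter.atTop (nhds 0) := by
        have := tendsto_inv_atTop_nhds_zero_nat.const_mul (Real.log c)
        simpa using this
      have := (Real.continuous_exp.tendsto 0).comp hlim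
      simpa [Function.comp_def] using this
    have : Filter.Tendsto (fun n : ℕ => (c ^ ((n:ℝ))⁻¹ + 1)) Filter.atTop (nhds 2) := by
      have := h2.add_const 1
      norm_num at this ⊢
      exact this
    exact this.mul_const (t - s)
  refine ge_of_tendsto htend ?_
  filter_upwards [Filter.eventually_ge_atTop 1] with n hn
  exact key n hn

lemma isSemilinear_of_ratios (f : ℝ → ℝ) (h0 : f 0 = 0) (h1 : f 1 = 1)
    (hg : MonotoneOn (fun x => f x / x) (Set.Ioc (0:ℝ) 1))
    (hh : AntitoneOn (fun x => f x / x ^ 2) (Set.Ioc (0:ℝ) 1)) :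
    IsSemilinearDiagonal f := by
  have hmono : MonotoneOn f (Set.Icc (0:ℝ) 1) := by
    intro s hs t ht hst
    rcases eq_or_lt_of_le hs.1 with rfl | hs0
    · rw [h0]
      rcases eq_or_lt_of_le hst with rfl | ht0
      · rw [h0]
      · exact le_trans (sq_nonneg t) (sq_le_fx h1 hh ⟨ht0, ht.2⟩)
    · have hsI : s ∈ Set.Ioc (0:ℝ) 1 := ⟨hs0, hs.2⟩
      have htI : t ∈ Set.Ioc (0:ℝ) 1 := ⟨lt_of_lt_of_le hs0 hst, ht.2⟩
      have := hg hsI htI hst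
      rw [div_le_div_iff₀ hs0 htI.1] at this
      have hft0 : 0 ≤ f t := le_trans (sq_nonneg t) (sq_le_fx h1 hh htI)
      nlinarith
  refine ⟨⟨h0, h1, hmono, ?_, ?_⟩, hg, hh⟩
  · intro t ht
    rcases eq_or_lt_of_le ht.1 with rfl | ht0
    · rw [h0]
    · exact fx_le h1 hg ⟨ht0, ht.2⟩
  · intro s hs t ht
    rcases le_total s t with hst | hst
    · rw [abs_sub_comm (f s) (f t), abs_sub_comm s t,
        abs_of_nonneg (sub_nonneg.2 (hmono hs ht hst)),
        abs_of_nonneg (sub_nonneg.2 hst)]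
      rcases eq_or_lt_of_le hs.1 with rfl | hs0
      · rw [h0]
        rcases eq_or_lt_of_le hst with rfl | ht0
        · rw [h0]; simp
        · have := fx_le h1 hg ⟨ht0, ht.2⟩; linarith
      · exact sl_lip h1 hg hh ⟨hs0, hs.2⟩ ⟨lt_of_lt_of_le hs0 hst, ht.2⟩ hst
    · rw [abs_of_nonneg (sub_nonneg.2 (hmono ht hs hst)),
        abs_of_nonneg (sub_nonneg.2 hst)]
      rcases eq_or_lt_of_le ht.1 with rfl | ht0
      · rw [h0]
        rcases eq_or_lt_of_le hst with rfl | hs0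
        · rw [h0]; simp
        · have := fx_le h1 hg ⟨hs0, hs.2⟩; linarith
      · exact sl_lip h1 hg hh ⟨ht0, ht.2⟩ ⟨lt_of_lt_of_le ht0 hst, hs.2⟩ hst

end ratios


lemma key_increment {G : ℝ → ℝ} (monoG : Monotone G) (contG : Continuous G)
    {A : Set ℝ} (hA : MeasurableSet A) {c : ℝ} (hc : 0 ≤ c)
    (hder : ∀ x ∈ A, ∃ y, HasDerivAt G y x ∧ c ≤ y)
    (u v : ℝ) (huv : u ≤ v) :
    ENNReal.ofReal c * volume (A ∩ Set.Ioc u v) ≤ ENNReal.ofReal (G v - G u) := by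
  set S : StieltjesFunction ℝ := ⟨G, monoG, fun x => contG.continuousWithinAt⟩ with hS
  have hcoe : ∀ x, S x = G x := fun x => rfl
  have hae := S.ae_hasDerivAt
  have hrd : ∀ᵐ x, x ∈ A → ENNReal.ofReal c ≤ Measure.rnDeriv S.measure volume x := by
    filter_upwards [hae] with x hx hxA
    obtain ⟨y, hy, hcy⟩ := hder x hxA
    have huniq : y = (Measure.rnDeriv S.measure volume x).toReal := hy.unique hx
    rcases eq_or_ne (Measure.rnDeriv S.measure volume x) ⊤ with hinf | hinf
    · rw [hinf]; exact le_top
    · rw [← ENNReal.ofReal_toReal hinf]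
      exact ENNReal.ofReal_le_ofReal (huniq ▸ hcy)
  have hmeas : MeasurableSet (A ∩ Set.Ioc u v) := hA.inter measurableSet_Ioc
  calc ENNReal.ofReal c * volume (A ∩ Set.Ioc u v)
      = ∫⁻ _ in A ∩ Set.Ioc u v, ENNReal.ofReal c ∂volume := (setLIntegral_const _ _).symm
    _ ≤ ∫⁻ x in A ∩ Set.Ioc u v, Measure.rnDeriv S.measure volume x ∂volume := by
        refine lintegral_mono_ae ?_
        exact (ae_restrict_iff' hmeas).2 (hrd.mono fun x hx hxm => hx hxm.1)
    _ ≤ ∫⁻ x in Set.Ioc u v, Measure.rnDeriv S.measure volume x ∂volume :=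
        lintegral_mono' (Measure.restrict_mono Set.inter_subset_right le_rfl) le_rfl
    _ = volume.withDensity (Measure.rnDeriv S.measure volume) (Set.Ioc u v) :=
        (withDensity_apply _ measurableSet_Ioc).symm
    _ ≤ S.measure (Set.Ioc u v) := Measure.withDensity_rnDeriv_le _ _ _
    _ = ENNReal.ofReal (G v - G u) := S.measure_Ioc u v

lemma key_increment_real {G : ℝ → ℝ} (monoG : Monotone G) (contG : Continuous G)
    {A : Set ℝ} (hA : MeasurableSet A) {c : ℝ} (hc : 0 ≤ c)
    (hder : ∀ x ∈ A, ∃ y, HasDerivAt G y x ∧ c ≤ y)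
    (u v : ℝ) (huv : u ≤ v) :
    c * (volume (A ∩ Set.Ioc u v)).toReal ≤ G v - G u := by
  have h := key_increment monoG contG hA hc hder u v huv
  have hfin : volume (A ∩ Set.Ioc u v) ≠ ⊤ :=
    ne_of_lt (lt_of_le_of_lt (measure_mono Set.inter_subset_right) measure_Ioc_lt_top)
  have h2 := ENNReal.toReal_mono ENNReal.ofReal_ne_top h
  rw [ENNReal.toReal_mul, ENNReal.toReal_ofReal hc,
    ENNReal.toReal_ofReal (sub_nonneg.2 (monoG huv))] at h2
  exact h2


lemma mono_perturb (d w : ℝ → ℝ) (A : Set ℝ) (a ε : ℝ) (ha0 : 0 ≤ a)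
    (hkg : ∀ x y, x ∈ Set.Ioc (0:ℝ) 1 → y ∈ Set.Ioc (0:ℝ) 1 → x ≤ y →
      a * (volume (A ∩ Set.Ioc x y)).toReal ≤ d y / y - d x / x)
    (hwd : ∀ x y, 0 ≤ x → x ≤ y → |w y - w x| ≤ ε * (volume (A ∩ Set.Ioc x y)).toReal)
    (hw12 : ∀ x, |w x| ≤ 1/2)
    (hdle : ∀ x ∈ Set.Ioc (0:ℝ) 1, d x ≤ x) (hd0 : ∀ x ∈ Set.Ioc (0:ℝ) 1, 0 ≤ d x)
    (hε0 : 0 ≤ ε) (hεa : ε ≤ a / 2) :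
    MonotoneOn (fun x => (d x * (1 + w x)) / x) (Set.Ioc (0:ℝ) 1) := by
  intro x hx y hy hxy
  simp only
  rw [mul_div_right_comm, mul_div_right_comm]
  set V : ℝ := (volume (A ∩ Set.Ioc x y)).toReal with hV
  have hV0 : 0 ≤ V := ENNReal.toReal_nonneg
  have hkg' := hkg x y hx hy hxy
  have hwdxy := hwd x y (le_of_lt hx.1) hxy
  have hwy := abs_le.1 (hw12 y)
  have hwdxy' := abs_le.1 hwdxy
  have hgx0 : 0 ≤ d x / x := div_nonneg (hd0 x hx) (le_of_lt hx.1)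
  have hgx1 : d x / x ≤ 1 := (div_le_one hx.1).2 (hdle x hx)
  have hqp : 0 ≤ d y / y - d x / x := le_trans (mul_nonneg ha0 hV0) hkg'
  have h1p : (1:ℝ)/2 ≤ 1 + w y := by linarith [hwy.1]
  have e1 : a * V * (1/2) ≤ (d y / y - d x / x) * (1 + w y) := by
    nlinarith [mul_le_mul_of_nonneg_left h1p hqp,
      mul_le_mul_of_nonneg_right hkg' (by norm_num : (0:ℝ) ≤ 1/2)]
  have e2 : -(ε * V) ≤ (d x / x) * (w y - w x) := by
    nlinarith [mul_nonneg hgx0 (by linarith [hwdxy'.1] : 0 ≤ w y - w x + ε * V),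
      mul_nonneg (by linarith : 0 ≤ 1 - d x / x) (mul_nonneg hε0 hV0)]
  have e3 : ε * V ≤ (a/2) * V := mul_le_mul_of_nonneg_right hεa hV0
  nlinarith [e1, e2, e3]

lemma anti_perturb (d w : ℝ → ℝ) (A : Set ℝ) (a ε Ma : ℝ)
    (haA : ∀ z ∈ A, a < z) (haI : a ∈ Set.Ioc (0:ℝ) 1)
    (hkh : ∀ x y, x ∈ Set.Ioc (0:ℝ) 1 → y ∈ Set.Ioc (0:ℝ) 1 → x ≤ y →
      a * (volume (A ∩ Set.Ioc x y)).toReal ≤ d x / x ^ 2 - d y / y ^ 2)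
    (hwd : ∀ x y, 0 ≤ x → x ≤ y → |w y - w x| ≤ ε * (volume (A ∩ Set.Ioc x y)).toReal)
    (hw12 : ∀ x, |w x| ≤ 1/2)
    (hM : ∀ y ∈ Set.Ioc (0:ℝ) 1, a ≤ y → d y / y ^ 2 ≤ Ma)
    (hq0 : ∀ y ∈ Set.Ioc (0:ℝ) 1, 0 ≤ d y / y ^ 2)
    (hε0 : 0 ≤ ε) (hεa : ε * (Ma + 1) ≤ a / 2) :
    AntitoneOn (fun x => (d x * (1 + w x)) / x ^ 2) (Set.Ioc (0:ℝ) 1) := by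
  intro x hx y hy hxy
  simp only
  rw [mul_div_right_comm, mul_div_right_comm]
  set V : ℝ := (volume (A ∩ Set.Ioc x y)).toReal with hV
  have hV0 : 0 ≤ V := ENNReal.toReal_nonneg
  have hkh' := hkh x y hx hy hxy
  have hwdxy' := abs_le.1 (hwd x y (le_of_lt hx.1) hxy)
  have hwx := abs_le.1 (hw12 x)
  have hpq : 0 ≤ d x / x ^ 2 - d y / y ^ 2 := le_trans (mul_nonneg (le_of_lt haI.1) hV0) hkh'
  have h1p : (1:ℝ)/2 ≤ 1 + w x := by linarith [hwx.1]
  rcases eq_or_lt_of_le hV0 with hV0' | hVpos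
  · -- V = 0, so w x = w y
    have hwe : w y = w x := by
      have h := hwd x y (le_of_lt hx.1) hxy
      rw [← hV, ← hV0', mul_zero] at h
      have := abs_nonpos_iff.1 h
      linarith [sub_eq_zero.1 this]
    rw [hwe]
    nlinarith
  · -- V > 0: the set is nonempty, so a < y
    have hne : (A ∩ Set.Ioc x y).Nonempty := by
      rw [Set.nonempty_iff_ne_empty]
      intro hemp
      rw [hV, hemp] at hVpos
      simp at hVpos
    obtain ⟨z, hzA, hzxy⟩ := hne
    have hay : a ≤ y := le_of_lt (lt_of_lt_of_le (haA z hzA) hzxy.2)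
    have hqM : d y / y ^ 2 ≤ Ma := hM y hy hay
    have hq0' : 0 ≤ d y / y ^ 2 := hq0 y hy
    have hMa0 : 0 ≤ Ma := le_trans hq0' hqM
    have e1 : a * V * (1/2) ≤ (d x / x ^ 2 - d y / y ^ 2) * (1 + w x) := by
      nlinarith [mul_le_mul_of_nonneg_left h1p hpq,
        mul_le_mul_of_nonneg_right hkh' (by norm_num : (0:ℝ) ≤ 1/2)]
    have e2 : -(Ma * (ε * V)) ≤ (d y / y ^ 2) * (w x - w y) := by
      nlinarith [mul_nonneg hq0' (by linarith [hwdxy'.2] : 0 ≤ w x - w y + ε * V),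
        mul_le_mul_of_nonneg_right hqM (mul_nonneg hε0 hV0)]
    have e3 : Ma * (ε * V) ≤ (a/2) * V := by
      nlinarith [mul_le_mul_of_nonneg_right hεa hV0, mul_nonneg hε0 hV0]
    nlinarith [e1, e2, e3]


lemma half_bound (ε T p q : ℝ) (hε0 : 0 < ε) (hε1 : ε ≤ 1 / (T + 1)) (hT : 0 < T)
    (hp : 0 ≤ p) (hq : 0 ≤ q) (hp2 : p ≤ T / 2) (hq2 : q ≤ T / 2) :
    |ε * (p - q)| ≤ 1 / 2 := by
  rw [abs_mul, abs_of_pos hε0]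
  have hpq : |p - q| ≤ T / 2 := abs_le.2 ⟨by linarith, by linarith⟩
  have hT1 : (0:ℝ) < T + 1 := by linarith
  have h5 := (le_div_iff₀ hT1).1 hε1
  nlinarith [mul_le_mul_of_nonneg_left hpq (le_of_lt hε0)]

set_option maxHeartbeats 1000000 in
theorem not_extreme_of_pos_measure (d : ℝ → ℝ) (hd : IsSemilinearDiagonal d)
    (hpos : 0 < volume {x : ℝ | x ∈ Set.Ioc (0:ℝ) 1 ∧
      ∃ y : ℝ, HasDerivAt d y x ∧ 1 / x < y / d x ∧ y / d x < 2 / x}) :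
    ∃ d₁ d₂ : ℝ → ℝ, IsSemilinearDiagonal d₁ ∧ IsSemilinearDiagonal d₂ ∧
      (∃ x ∈ Set.Icc (0:ℝ) 1, d₁ x ≠ d₂ x) ∧
      (∀ x ∈ Set.Icc (0:ℝ) 1, d x = (d₁ x + d₂ x) / 2) := by
  obtain ⟨⟨hd0, hd1, hdmono, hdle0, hdlip⟩, hg, hh⟩ := hd
  have hdsq : ∀ x ∈ Set.Ioc (0:ℝ) 1, x ^ 2 ≤ d x := fun x hx => sq_le_fx hd1 hh hx
  have hdlex : ∀ x ∈ Set.Ioc (0:ℝ) 1, d x ≤ x := fun x hx => fx_le hd1 hg hx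
  have hdpos : ∀ x ∈ Set.Ioc (0:ℝ) 1, 0 < d x :=
    fun x hx => lt_of_lt_of_le (pow_pos hx.1 2) (hdsq x hx)
  -- continuous clamped version of d
  have hdlipOn : LipschitzOnWith 2 d (Set.Icc 0 1) := by
    rw [lipschitzOnWith_iff_dist_le_mul]
    intro x hx y hy
    rw [Real.dist_eq, Real.dist_eq]
    exact_mod_cast hdlip x hx y hy
  have hdcont : ContinuousOn d (Set.Icc 0 1) := hdlipOn.continuousOn
  have hclamp_cont : Continuous fun x : ℝ => max 0 (min x 1) :=
    continuous_const.max (continuous_id.min continuous_const)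
  have hclamp_maps : ∀ x : ℝ, max 0 (min x 1) ∈ Set.Icc (0:ℝ) 1 :=
    fun x => ⟨le_max_left _ _, max_le zero_le_one (min_le_right _ _)⟩
  set D : ℝ → ℝ := fun x => d (max 0 (min x 1)) with hD
  have hDcont : Continuous D := hdcont.comp_continuous hclamp_cont hclamp_maps
  have hDeq : ∀ x ∈ Set.Ioc (0:ℝ) 1, D x = d x := by
    intro x hx
    have hcl : max 0 (min x 1) = x := by
      rw [min_eq_left hx.2, max_eq_right (le_of_lt hx.1)]
    show d (max 0 (min x 1)) = d x
    rw [hcl]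
  set γ : ℝ → ℝ := fun x => (deriv d x - D x / x) / x with hγ
  set η : ℝ → ℝ := fun x => (deriv d x - 2 * (D x / x)) / x ^ 2 with hη
  set S : Set ℝ := {x | x ∈ Set.Ioc (0:ℝ) 1 ∧ DifferentiableAt ℝ d x ∧
    1 / x < deriv d x / D x ∧ deriv d x / D x < 2 / x} with hS
  have hSsub : S ⊆ Set.Ioc (0:ℝ) 1 := fun x hx => hx.1
  have hSeq : {x : ℝ | x ∈ Set.Ioc (0:ℝ) 1 ∧
      ∃ y : ℝ, HasDerivAt d y x ∧ 1 / x < y / d x ∧ y / d x < 2 / x} = S := by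
    ext x
    simp only [hS, Set.mem_setOf_eq]
    constructor
    · rintro ⟨hx, y, hy, h1, h2⟩
      refine ⟨hx, hy.differentiableAt, ?_, ?_⟩
      · rw [hDeq x hx, hy.deriv]; exact h1
      · rw [hDeq x hx, hy.deriv]; exact h2
    · rintro ⟨hx, hdiff, h1, h2⟩
      rw [hDeq x hx] at h1 h2
      exact ⟨hx, deriv d x, hdiff.hasDerivAt, h1, h2⟩
  have hSpos : 0 < volume S := hSeq ▸ hpos
  have hγmeas : Measurable γ :=
    ((measurable_deriv d).sub (hDcont.measurable.div measurable_id)).div measurable_id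
  have hηmeas : Measurable η := by
    apply Measurable.div
    · exact (measurable_deriv d).sub ((hDcont.measurable.div measurable_id).const_mul 2)
    · exact measurable_id.pow_const 2
  have hSmeas : MeasurableSet S := by
    have hrw : S = Set.Ioc (0:ℝ) 1 ∩ ({x | DifferentiableAt ℝ d x} ∩
        ({x | 1 / x < deriv d x / D x} ∩ {x | deriv d x / D x < 2 / x})) := by
      ext x; simp only [hS, Set.mem_setOf_eq, Set.mem_inter_iff]
    rw [hrw]
    refine measurableSet_Ioc.inter ((measurableSet_of_differentiableAt ℝ d).inter
      (MeasurableSet.inter ?_ ?_))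
    · exact measurableSet_lt (measurable_const.div measurable_id)
        ((measurable_deriv d).div hDcont.measurable)
    · exact measurableSet_lt ((measurable_deriv d).div hDcont.measurable)
        (measurable_const.div measurable_id)
  set Afam : ℕ → Set ℝ := fun n => {x | x ∈ S ∧ 1 / (n + 1 : ℝ) < x ∧ x < 1 ∧
    1 / (n + 1 : ℝ) ≤ γ x ∧ η x ≤ -(1 / (n + 1 : ℝ))} with hAfam
  have hAfammeas : ∀ n, MeasurableSet (Afam n) := by
    intro n
    have hrw : Afam n = S ∩ (Set.Ioi (1 / (n + 1 : ℝ)) ∩ (Set.Iio 1 ∩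
        ({x | 1 / (n + 1 : ℝ) ≤ γ x} ∩ {x | η x ≤ -(1 / (n + 1 : ℝ))}))) := by
      ext x
      simp only [hAfam, Set.mem_setOf_eq, Set.mem_inter_iff, Set.mem_Ioi, Set.mem_Iio]
    rw [hrw]
    exact hSmeas.inter (measurableSet_Ioi.inter (measurableSet_Iio.inter
      ((measurableSet_le measurable_const hγmeas).inter
        (measurableSet_le hηmeas measurable_const))))
  have hcover : S ∩ Set.Iio 1 ⊆ ⋃ n, Afam n := by
    rintro x ⟨hxS, hx1⟩
    obtain ⟨hxI, hdiff, h1, h2⟩ := hxS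
    have hx0 : (0:ℝ) < x := hxI.1
    have hdx : 0 < d x := hdpos x hxI
    have hDx : D x = d x := hDeq x hxI
    rw [hDx] at h1 h2
    have hγpos : 0 < γ x := by
      show 0 < (deriv d x - D x / x) / x
      rw [hDx]
      apply div_pos _ hx0
      rw [sub_pos, div_lt_iff₀ hx0]
      rw [div_lt_div_iff₀ hx0 hdx] at h1
      linarith
    have hηneg : 0 < -η x := by
      show 0 < -((deriv d x - 2 * (D x / x)) / x ^ 2)
      rw [hDx, neg_pos]
      apply div_neg_of_neg_of_pos _ (pow_pos hx0 2)
      rw [sub_neg, show 2 * (d x / x) = 2 * d x / x by ring, lt_div_iff₀ hx0]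
      rw [div_lt_div_iff₀ hdx hx0] at h2
      linarith
    obtain ⟨n, hn⟩ := exists_nat_one_div_lt
      (show 0 < min x (min (γ x) (-η x)) from lt_min hx0 (lt_min hγpos hηneg))
    refine Set.mem_iUnion.2 ⟨n, ?_⟩
    have hn1 : 1 / (n + 1 : ℝ) < x := lt_of_lt_of_le hn (min_le_left _ _)
    have hn2 : 1 / (n + 1 : ℝ) ≤ γ x :=
      le_of_lt (lt_of_lt_of_le hn (le_trans (min_le_right _ _) (min_le_left _ _)))
    have hn3 : 1 / (n + 1 : ℝ) ≤ -η x :=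
      le_of_lt (lt_of_lt_of_le hn (le_trans (min_le_right _ _) (min_le_right _ _)))
    exact ⟨⟨hxI, hdiff, by rwa [hDx], by rwa [hDx]⟩, hn1, hx1, hn2, by linarith⟩
  have hex : ∃ n, volume (Afam n) ≠ 0 := by
    by_contra hno
    push_neg at hno
    have h0 : volume (⋃ n, Afam n) = 0 := measure_iUnion_null hno
    have h1' : volume (S ∩ Set.Iio 1) = 0 := measure_mono_null hcover h0
    have h2' : volume S ≤ volume (S ∩ Set.Iio 1) + volume {(1:ℝ)} := by
      refine le_trans (measure_mono ?_) (measure_union_le _ _)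
      intro x hx
      rcases lt_or_eq_of_le (hSsub hx).2 with h | h
      · exact Or.inl ⟨hx, h⟩
      · exact Or.inr (by simp [h])
    rw [h1', Real.volume_singleton, zero_add] at h2'
    exact absurd (le_antisymm h2' zero_le) (ne_of_gt hSpos)
  obtain ⟨n, hn0⟩ := hex
  set a : ℝ := 1 / (n + 1 : ℝ) with ha
  have ha0 : 0 < a := by positivity
  have ha1 : a ≤ 1 := by
    rw [ha, div_le_one (by positivity)]
    simp
  have haIoc : a ∈ Set.Ioc (0:ℝ) 1 := ⟨ha0, ha1⟩
  set A : Set ℝ := Afam n with hA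
  have memA : ∀ z ∈ A, z ∈ S ∧ a < z ∧ z < 1 ∧ a ≤ γ z ∧ η z ≤ -a := fun z hz => hz
  have hAmeas : MeasurableSet A := hAfammeas n
  have hAsub : A ⊆ Set.Ioc (0:ℝ) 1 := fun z hz => hSsub (memA z hz).1
  have hApos : 0 < volume A := pos_iff_ne_zero.2 hn0
  have hAfin : volume A ≠ ⊤ :=
    ne_of_lt (lt_of_le_of_lt (measure_mono hAsub) measure_Ioc_lt_top)
  -- clamp to [a, 1]
  set cl : ℝ → ℝ := fun x => max a (min x 1) with hcl
  have hcl_mem : ∀ x, cl x ∈ Set.Icc a 1 :=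
    fun x => ⟨le_max_left _ _, max_le ha1 (min_le_right _ _)⟩
  have hcl_Ioc : ∀ x, cl x ∈ Set.Ioc (0:ℝ) 1 :=
    fun x => ⟨lt_of_lt_of_le ha0 (hcl_mem x).1, (hcl_mem x).2⟩
  have hcl_eq : ∀ x, a ≤ x → x ≤ 1 → cl x = x := by
    intro x h1 h2
    show max a (min x 1) = x
    rw [min_eq_left h2, max_eq_right h1]
  have hcl_mono : Monotone cl := monotone_const.max (monotone_id.min monotone_const)
  have hcl_cont : Continuous cl := continuous_const.max (continuous_id.min continuous_const)
  set G : ℝ → ℝ := fun x => d (cl x) / cl x with hG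
  set H : ℝ → ℝ := fun x => -(d (cl x) / (cl x) ^ 2) with hH
  have monoG : Monotone G := fun x y hxy => hg (hcl_Ioc x) (hcl_Ioc y) (hcl_mono hxy)
  have monoH : Monotone H :=
    fun x y hxy => neg_le_neg (hh (hcl_Ioc x) (hcl_Ioc y) (hcl_mono hxy))
  have hdcl_cont : Continuous fun x => d (cl x) :=
    hdcont.comp_continuous hcl_cont
      (fun x => ⟨le_of_lt (hcl_Ioc x).1, (hcl_Ioc x).2⟩)
  have contG : Continuous G :=
    hdcl_cont.div hcl_cont (fun x => ne_of_gt (hcl_Ioc x).1)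
  have contH : Continuous H :=
    (hdcl_cont.div (hcl_cont.pow 2) (fun x => ne_of_gt (pow_pos (hcl_Ioc x).1 2))).neg
  have hderG : ∀ x ∈ A, ∃ y, HasDerivAt G y x ∧ a ≤ y := by
    intro x hx
    obtain ⟨hxS, hax, hx1, hγx, hηx⟩ := memA x hx
    obtain ⟨hxI, hdiff, _, _⟩ := hxS
    have hx0 : 0 < x := hxI.1
    have hdd : HasDerivAt d (deriv d x) x := hdiff.hasDerivAt
    have hgd : HasDerivAt (fun z => d z / z) ((deriv d x * x - d x * 1) / x ^ 2) x :=
      hdd.div (hasDerivAt_id x) (ne_of_gt hx0)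
    have heq : G =ᶠ[nhds x] fun z => d z / z := by
      filter_upwards [Ioo_mem_nhds hax hx1] with z hz
      show d (cl z) / cl z = d z / z
      rw [hcl_eq z (le_of_lt hz.1) (le_of_lt hz.2)]
    refine ⟨_, hgd.congr_of_eventuallyEq heq, ?_⟩
    have hval : (deriv d x * x - d x * 1) / x ^ 2 = γ x := by
      show _ = (deriv d x - D x / x) / x
      rw [hDeq x hxI, mul_one, pow_two, ← div_div, sub_div,
        mul_div_cancel_right₀ _ (ne_of_gt hx0)]
    rw [hval]
    exact hγx
  have hderH : ∀ x ∈ A, ∃ y, HasDerivAt H y x ∧ a ≤ y := by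
    intro x hx
    obtain ⟨hxS, hax, hx1, hγx, hηx⟩ := memA x hx
    obtain ⟨hxI, hdiff, _, _⟩ := hxS
    have hx0 : 0 < x := hxI.1
    have hdd : HasDerivAt d (deriv d x) x := hdiff.hasDerivAt
    have hpow : HasDerivAt (fun z : ℝ => z ^ 2) (2 * x) x := by
      simpa using hasDerivAt_pow 2 x
    have hhd : HasDerivAt (fun z => -(d z / z ^ 2))
        (-((deriv d x * x ^ 2 - d x * (2 * x)) / (x ^ 2) ^ 2)) x :=
      (hdd.div hpow (ne_of_gt (pow_pos hx0 2))).neg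
    have heq : H =ᶠ[nhds x] fun z => -(d z / z ^ 2) := by
      filter_upwards [Ioo_mem_nhds hax hx1] with z hz
      show -(d (cl z) / (cl z) ^ 2) = -(d z / z ^ 2)
      rw [hcl_eq z (le_of_lt hz.1) (le_of_lt hz.2)]
    refine ⟨_, hhd.congr_of_eventuallyEq heq, ?_⟩
    have hval : -((deriv d x * x ^ 2 - d x * (2 * x)) / (x ^ 2) ^ 2) = -η x := by
      show _ = -((deriv d x - 2 * (D x / x)) / x ^ 2)
      rw [hDeq x hxI, neg_inj, div_eq_div_iff (by positivity) (by positivity)]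
      field_simp
    rw [hval]
    linarith
  -- key increment inequalities
  have keyG : ∀ x y, x ∈ Set.Ioc (0:ℝ) 1 → y ∈ Set.Ioc (0:ℝ) 1 → x ≤ y →
      a * (volume (A ∩ Set.Ioc x y)).toReal ≤ d y / y - d x / x := by
    intro x y hx hy hxy
    by_cases hya : y ≤ a
    · have hemp : A ∩ Set.Ioc x y = ∅ := by
        ext z
        simp only [Set.mem_inter_iff, Set.mem_Ioc, Set.mem_empty_iff_false, iff_false, not_and]
        intro hzA hzx hzy
        linarith [(memA z hzA).2.1]
      rw [hemp]
      simp only [measure_empty, ENNReal.toReal_zero, mul_zero]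
      exact sub_nonneg.2 (hg hx hy hxy)
    · push_neg at hya
      set u : ℝ := max x a with hu
      have hua : a ≤ u := le_max_right _ _
      have hu1 : u ≤ 1 := max_le hx.2 ha1
      have huy : u ≤ y := max_le hxy (le_of_lt hya)
      have huIoc : u ∈ Set.Ioc (0:ℝ) 1 := ⟨lt_of_lt_of_le ha0 hua, hu1⟩
      have hGu : G u = d u / u := by show d (cl u) / cl u = _; rw [hcl_eq u hua hu1]
      have hGy : G y = d y / y := by
        show d (cl y) / cl y = _; rw [hcl_eq y (le_of_lt hya) hy.2]
      have hIeq : A ∩ Set.Ioc x y = A ∩ Set.Ioc u y := by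
        ext z
        simp only [Set.mem_inter_iff, Set.mem_Ioc]
        constructor
        · rintro ⟨hzA, hzx, hzy⟩
          exact ⟨hzA, max_lt hzx (memA z hzA).2.1, hzy⟩
        · rintro ⟨hzA, hzu, hzy⟩
          exact ⟨hzA, lt_of_le_of_lt (le_max_left _ _) hzu, hzy⟩
      have hk := key_increment_real monoG contG hAmeas (le_of_lt ha0) hderG u y huy
      rw [hGu, hGy] at hk
      have hxu : d x / x ≤ d u / u := hg hx huIoc (le_max_left _ _)
      rw [hIeq]
      linarith
  have keyH : ∀ x y, x ∈ Set.Ioc (0:ℝ) 1 → y ∈ Set.Ioc (0:ℝ) 1 → x ≤ y →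
      a * (volume (A ∩ Set.Ioc x y)).toReal ≤ d x / x ^ 2 - d y / y ^ 2 := by
    intro x y hx hy hxy
    by_cases hya : y ≤ a
    · have hemp : A ∩ Set.Ioc x y = ∅ := by
        ext z
        simp only [Set.mem_inter_iff, Set.mem_Ioc, Set.mem_empty_iff_false, iff_false, not_and]
        intro hzA hzx hzy
        linarith [(memA z hzA).2.1]
      rw [hemp]
      simp only [measure_empty, ENNReal.toReal_zero, mul_zero]
      exact sub_nonneg.2 (hh hx hy hxy)
    · push_neg at hya
      set u : ℝ := max x a with hu
      have hua : a ≤ u := le_max_right _ _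
      have hu1 : u ≤ 1 := max_le hx.2 ha1
      have huy : u ≤ y := max_le hxy (le_of_lt hya)
      have huIoc : u ∈ Set.Ioc (0:ℝ) 1 := ⟨lt_of_lt_of_le ha0 hua, hu1⟩
      have hHu : H u = -(d u / u ^ 2) := by
        show -(d (cl u) / (cl u) ^ 2) = _; rw [hcl_eq u hua hu1]
      have hHy : H y = -(d y / y ^ 2) := by
        show -(d (cl y) / (cl y) ^ 2) = _; rw [hcl_eq y (le_of_lt hya) hy.2]
      have hIeq : A ∩ Set.Ioc x y = A ∩ Set.Ioc u y := by
        ext z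
        simp only [Set.mem_inter_iff, Set.mem_Ioc]
        constructor
        · rintro ⟨hzA, hzx, hzy⟩
          exact ⟨hzA, max_lt hzx (memA z hzA).2.1, hzy⟩
        · rintro ⟨hzA, hzu, hzy⟩
          exact ⟨hzA, lt_of_le_of_lt (le_max_left _ _) hzu, hzy⟩
      have hk := key_increment_real monoH contH hAmeas (le_of_lt ha0) hderH u y huy
      rw [hHu, hHy] at hk
      have hxu : d u / u ^ 2 ≤ d x / x ^ 2 := hh hx huIoc (le_max_left _ _)
      rw [hIeq]
      linarith
  -- median split
  set T : ℝ := (volume A).toReal with hT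
  have hTpos : 0 < T := ENNReal.toReal_pos hn0 hAfin
  set F : ℝ → ℝ := fun t => (volume (A ∩ Set.Iic t)).toReal with hF
  have hfinsub : ∀ B : Set ℝ, B ⊆ A → volume B ≠ ⊤ :=
    fun B hB => ne_top_of_le_ne_top hAfin (measure_mono hB)
  have hFle : ∀ s t : ℝ, s ≤ t → F t ≤ F s + (t - s) ∧ F s ≤ F t := by
    intro s t hst
    constructor
    · have hsub2 : A ∩ Set.Iic t ⊆ (A ∩ Set.Iic s) ∪ Set.Ioc s t := by
        rintro z ⟨hzA, hzt⟩
        rcases le_or_gt z s with h | h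
        · exact Or.inl ⟨hzA, h⟩
        · exact Or.inr ⟨h, hzt⟩
      have h2 : volume (A ∩ Set.Iic t) ≤ volume (A ∩ Set.Iic s) + ENNReal.ofReal (t - s) := by
        have := (measure_mono (μ := volume) hsub2).trans (measure_union_le _ _)
        rwa [Real.volume_Ioc] at this
      have hfs : volume (A ∩ Set.Iic s) ≠ ⊤ := hfinsub (A ∩ Set.Iic s) Set.inter_subset_left
      have h3 := ENNReal.toReal_mono
        (ENNReal.add_ne_top.2 ⟨hfs, ENNReal.ofReal_ne_top⟩) h2
      rwa [ENNReal.toReal_add hfs ENNReal.ofReal_ne_top,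
        ENNReal.toReal_ofReal (sub_nonneg.2 hst)] at h3
    · exact ENNReal.toReal_mono (hfinsub _ Set.inter_subset_left)
        (measure_mono (Set.inter_subset_inter_right _ (Set.Iic_subset_Iic.2 hst)))
  have hFcont : Continuous F := by
    have : LipschitzWith 1 F := by
      refine LipschitzWith.of_dist_le_mul fun s t => ?_
      rw [NNReal.coe_one, one_mul, Real.dist_eq, Real.dist_eq]
      rcases le_total s t with h | h
      · obtain ⟨h1, h2⟩ := hFle s t h
        have habs : |s - t| = t - s := by rw [abs_sub_comm, abs_of_nonneg (sub_nonneg.2 h)]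
        rw [habs, abs_le]
        constructor <;> linarith
      · obtain ⟨h1, h2⟩ := hFle t s h
        have habs : |s - t| = s - t := abs_of_nonneg (sub_nonneg.2 h)
        rw [habs, abs_le]
        constructor <;> linarith
    exact this.continuous
  have hFa : F a = 0 := by
    have hemp : A ∩ Set.Iic a = ∅ := by
      ext z
      simp only [Set.mem_inter_iff, Set.mem_Iic, Set.mem_empty_iff_false, iff_false, not_and]
      intro hzA
      exact not_le.2 (memA z hzA).2.1
    show (volume (A ∩ Set.Iic a)).toReal = 0
    rw [hemp]
    simp
  have hF1 : F 1 = T := by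
    have heq1 : A ∩ Set.Iic 1 = A :=
      Set.inter_eq_self_of_subset_left (fun z hz => (hAsub hz).2)
    show (volume (A ∩ Set.Iic 1)).toReal = T
    rw [heq1]
  have hmemIcc : T / 2 ∈ Set.Icc (F a) (F 1) := by
    rw [hFa, hF1]
    constructor <;> linarith
  obtain ⟨m, hmIcc, hFm⟩ := intermediate_value_Icc ha1 hFcont.continuousOn hmemIcc
  set A₁ : Set ℝ := A ∩ Set.Iic m with hA₁
  set A₂ : Set ℝ := A ∩ Set.Ioi m with hA₂
  have hA₁meas : MeasurableSet A₁ := hAmeas.inter measurableSet_Iic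
  have hA₂meas : MeasurableSet A₂ := hAmeas.inter measurableSet_Ioi
  have hA₁fin : volume A₁ ≠ ⊤ := hfinsub _ Set.inter_subset_left
  have hA₂fin : volume A₂ ≠ ⊤ := hfinsub _ Set.inter_subset_left
  have hsplitI : ∀ I : Set ℝ, MeasurableSet I →
      volume (A₁ ∩ I) + volume (A₂ ∩ I) = volume (A ∩ I) := by
    intro I hI
    rw [← measure_union ?_ (hA₂meas.inter hI)]
    · congr 1
      ext z
      simp only [Set.mem_union, Set.mem_inter_iff, Set.mem_Iic, Set.mem_Ioi, hA₁, hA₂]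
      constructor
      · rintro (⟨⟨z1, z2⟩, z3⟩ | ⟨⟨z1, z2⟩, z3⟩) <;> exact ⟨z1, z3⟩
      · rintro ⟨z1, z3⟩
        rcases le_or_gt z m with hzm | hzm
        · exact Or.inl ⟨⟨z1, hzm⟩, z3⟩
        · exact Or.inr ⟨⟨z1, hzm⟩, z3⟩
    · rw [Set.disjoint_left]
      rintro z ⟨⟨_, hz1⟩, _⟩ ⟨⟨_, hz2⟩, _⟩
      exact absurd (show z ≤ m from hz1) (not_le.2 hz2)
  have hvolA1 : (volume A₁).toReal = T / 2 := hFm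
  have hvolA2 : (volume A₂).toReal = T / 2 := by
    have hsum : volume A₁ + volume A₂ = volume A := by
      have := hsplitI Set.univ MeasurableSet.univ
      simpa using this
    have := congrArg ENNReal.toReal hsum
    rw [ENNReal.toReal_add hA₁fin hA₂fin] at this
    rw [hvolA1] at this
    linarith [this]
  -- the perturbation constant
  set Ma : ℝ := d a / a ^ 2 with hMa
  have hMa0 : 0 ≤ Ma := le_of_lt (div_pos (hdpos a haIoc) (pow_pos ha0 2))
  set ε : ℝ := min (1 / (T + 1)) (a / (2 * (Ma + 1))) with hε
  have hε0 : 0 < ε := lt_min (by positivity) (by positivity)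
  have hε1 : ε ≤ 1 / (T + 1) := min_le_left _ _
  have hε2 : ε ≤ a / (2 * (Ma + 1)) := min_le_right _ _
  have hεa2 : ε * (Ma + 1) ≤ a / 2 := by
    have h := (le_div_iff₀ (by positivity : (0:ℝ) < 2 * (Ma + 1))).1 hε2
    nlinarith
  have hεa : ε ≤ a / 2 := by nlinarith
  set w : ℝ → ℝ := fun x =>
    ε * ((volume (A₁ ∩ Set.Ioc 0 x)).toReal - (volume (A₂ ∩ Set.Ioc 0 x)).toReal) with hw
  have hb1 : ∀ x, (volume (A₁ ∩ Set.Ioc 0 x)).toReal ≤ T / 2 := by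
    intro x
    rw [← hvolA1]
    exact ENNReal.toReal_mono hA₁fin (measure_mono Set.inter_subset_left)
  have hb2 : ∀ x, (volume (A₂ ∩ Set.Ioc 0 x)).toReal ≤ T / 2 := by
    intro x
    rw [← hvolA2]
    exact ENNReal.toReal_mono hA₂fin (measure_mono Set.inter_subset_left)
  have hw12 : ∀ x, |w x| ≤ 1 / 2 := fun x =>
    half_bound ε T _ _ hε0 hε1 hTpos ENNReal.toReal_nonneg ENNReal.toReal_nonneg
      (hb1 x) (hb2 x)
  have hwd : ∀ x y : ℝ, 0 ≤ x → x ≤ y →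
      |w y - w x| ≤ ε * (volume (A ∩ Set.Ioc x y)).toReal := by
    intro x y hx0 hxy
    have hsplit1 : volume (A₁ ∩ Set.Ioc 0 y)
        = volume (A₁ ∩ Set.Ioc 0 x) + volume (A₁ ∩ Set.Ioc x y) := by
      rw [← measure_union ?_ (hA₁meas.inter measurableSet_Ioc)]
      · rw [← Set.inter_union_distrib_left, Set.Ioc_union_Ioc_eq_Ioc hx0 hxy]
      · rw [Set.disjoint_left]
        rintro z ⟨_, _, hz1⟩ ⟨_, hz2, _⟩
        exact absurd hz1 (not_le.2 hz2)
    have hsplit2 : volume (A₂ ∩ Set.Ioc 0 y)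
        = volume (A₂ ∩ Set.Ioc 0 x) + volume (A₂ ∩ Set.Ioc x y) := by
      rw [← measure_union ?_ (hA₂meas.inter measurableSet_Ioc)]
      · rw [← Set.inter_union_distrib_left, Set.Ioc_union_Ioc_eq_Ioc hx0 hxy]
      · rw [Set.disjoint_left]
        rintro z ⟨_, _, hz1⟩ ⟨_, hz2, _⟩
        exact absurd hz1 (not_le.2 hz2)
    have hfinA1 : ∀ I : Set ℝ, volume (A₁ ∩ I) ≠ ⊤ :=
      fun I => hfinsub _ (Set.inter_subset_left.trans Set.inter_subset_left)
    have hfinA2 : ∀ I : Set ℝ, volume (A₂ ∩ I) ≠ ⊤ :=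
      fun I => hfinsub _ (Set.inter_subset_left.trans Set.inter_subset_left)
    have ht1 := congrArg ENNReal.toReal hsplit1
    have ht2 := congrArg ENNReal.toReal hsplit2
    rw [ENNReal.toReal_add (hfinA1 _) (hfinA1 _)] at ht1
    rw [ENNReal.toReal_add (hfinA2 _) (hfinA2 _)] at ht2
    have hsum : (volume (A₁ ∩ Set.Ioc x y)).toReal + (volume (A₂ ∩ Set.Ioc x y)).toReal
        = (volume (A ∩ Set.Ioc x y)).toReal := by
      have := congrArg ENNReal.toReal (hsplitI (Set.Ioc x y) measurableSet_Ioc)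
      rwa [ENNReal.toReal_add (hfinA1 _) (hfinA2 _)] at this
    have h3 : (0:ℝ) ≤ (volume (A₁ ∩ Set.Ioc x y)).toReal := ENNReal.toReal_nonneg
    have h4 : (0:ℝ) ≤ (volume (A₂ ∩ Set.Ioc x y)).toReal := ENNReal.toReal_nonneg
    have hwyx : w y - w x = ε * ((volume (A₁ ∩ Set.Ioc x y)).toReal
        - (volume (A₂ ∩ Set.Ioc x y)).toReal) := by
      show ε * _ - ε * _ = _
      rw [ht1, ht2]
      ring
    rw [hwyx, abs_mul, abs_of_pos hε0, ← hsum]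
    have : |(volume (A₁ ∩ Set.Ioc x y)).toReal - (volume (A₂ ∩ Set.Ioc x y)).toReal|
        ≤ (volume (A₁ ∩ Set.Ioc x y)).toReal + (volume (A₂ ∩ Set.Ioc x y)).toReal :=
      abs_le.2 ⟨by linarith, by linarith⟩
    exact mul_le_mul_of_nonneg_left this (le_of_lt hε0)
  -- bounds for the anti_perturb lemma
  have hMbound : ∀ y ∈ Set.Ioc (0:ℝ) 1, a ≤ y → d y / y ^ 2 ≤ Ma :=
    fun y hy hay => hh haIoc hy hay
  have hq0 : ∀ y ∈ Set.Ioc (0:ℝ) 1, 0 ≤ d y / y ^ 2 :=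
    fun y hy => le_of_lt (div_pos (hdpos y hy) (pow_pos hy.1 2))
  have haA : ∀ z ∈ A, a < z := fun z hz => (memA z hz).2.1
  have hd0' : ∀ x ∈ Set.Ioc (0:ℝ) 1, 0 ≤ d x := fun x hx => le_of_lt (hdpos x hx)
  -- the negated perturbation also satisfies the difference bounds
  have hwd' : ∀ x y : ℝ, 0 ≤ x → x ≤ y →
      |(-(w y)) - (-(w x))| ≤ ε * (volume (A ∩ Set.Ioc x y)).toReal := by
    intro x y hx0 hxy
    rw [show -(w y) - -(w x) = -(w y - w x) by ring, abs_neg]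
    exact hwd x y hx0 hxy
  have hw12' : ∀ x, |(-(w x))| ≤ 1 / 2 := fun x => by rw [abs_neg]; exact hw12 x
  -- monotonicity statements
  have hG1 := mono_perturb d w A a ε (le_of_lt ha0) keyG hwd hw12 hdlex hd0'
    (le_of_lt hε0) hεa
  have hG2' := mono_perturb d (fun x => -w x) A a ε (le_of_lt ha0) keyG hwd' hw12' hdlex hd0'
    (le_of_lt hε0) hεa
  have hH1 := anti_perturb d w A a ε Ma haA haIoc keyH hwd hw12 hMbound hq0
    (le_of_lt hε0) hεa2
  have hH2' := anti_perturb d (fun x => -w x) A a ε Ma haA haIoc keyH hwd' hw12' hMbound hq0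
    (le_of_lt hε0) hεa2
  have hG2 : MonotoneOn (fun x => (d x * (1 - w x)) / x) (Set.Ioc (0:ℝ) 1) := by
    have heq : (fun x => (d x * (1 + (fun x => -w x) x)) / x)
        = fun x => (d x * (1 - w x)) / x := by
      funext z; ring_nf
    rwa [heq] at hG2'
  have hH2 : AntitoneOn (fun x => (d x * (1 - w x)) / x ^ 2) (Set.Ioc (0:ℝ) 1) := by
    have heq : (fun x => (d x * (1 + (fun x => -w x) x)) / x ^ 2)
        = fun x => (d x * (1 - w x)) / x ^ 2 := by
      funext z; ring_nf
    rwa [heq] at hH2'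
  -- boundary values
  have hw1 : w 1 = 0 := by
    have he1 : A₁ ∩ Set.Ioc 0 1 = A₁ :=
      Set.inter_eq_self_of_subset_left (fun z hz => hAsub hz.1)
    have he2 : A₂ ∩ Set.Ioc 0 1 = A₂ :=
      Set.inter_eq_self_of_subset_left (fun z hz => hAsub hz.1)
    show ε * ((volume (A₁ ∩ Set.Ioc 0 1)).toReal - (volume (A₂ ∩ Set.Ioc 0 1)).toReal) = 0
    rw [he1, he2, hvolA1, hvolA2]
    ring
  refine ⟨fun x => d x * (1 + w x), fun x => d x * (1 - w x), ?_, ?_, ?_, ?_⟩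
  · exact isSemilinear_of_ratios _ (by rw [hd0]; ring)
      (by show d 1 * (1 + w 1) = 1; rw [hw1, hd1]; ring) hG1 hH1
  · exact isSemilinear_of_ratios _ (by rw [hd0]; ring)
      (by show d 1 * (1 - w 1) = 1; rw [hw1, hd1]; ring) hG2 hH2
  · -- nontrivial at m
    have hm0 : 0 < m := lt_of_lt_of_le ha0 hmIcc.1
    have hmIoc : m ∈ Set.Ioc (0:ℝ) 1 := ⟨hm0, hmIcc.2⟩
    have hdm : 0 < d m := hdpos m hmIoc
    have he1 : A₁ ∩ Set.Ioc 0 m = A₁ := by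
      apply Set.inter_eq_self_of_subset_left
      rintro z ⟨hzA, hzm⟩
      exact ⟨(hAsub hzA).1, hzm⟩
    have he2 : A₂ ∩ Set.Ioc 0 m = ∅ := by
      ext z
      simp only [Set.mem_inter_iff, Set.mem_Ioc, Set.mem_empty_iff_false, iff_false, not_and]
      rintro ⟨_, hzm⟩ _
      intro h
      exact absurd h (not_le.2 hzm)
    have hwm : w m = ε * (T / 2) := by
      show ε * ((volume (A₁ ∩ Set.Ioc 0 m)).toReal - (volume (A₂ ∩ Set.Ioc 0 m)).toReal) = _
      rw [he1, he2, hvolA1]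
      simp
    have hwmpos : 0 < w m := by
      rw [hwm]; positivity
    refine ⟨m, ⟨le_of_lt hm0, hmIcc.2⟩, ?_⟩
    intro hEq
    have hEq' : d m * (1 + w m) = d m * (1 - w m) := hEq
    nlinarith [mul_pos hdm hwmpos]
  · intro x hx
    ring
end

section
/- Let δ be a diagonal section of a lower semilinear copula such that the set {x ∈ (0,1] : δ is differentiable at x and 1/x < δ'(x)/δ(x) < 2/x} has Lebesgue measure zero. Then δ is an extreme point of the convex set of diagonal sections of lower semilinear copulas. -/
open MeasureTheory Set
open scoped NNReal ENNReal


lemma deriv_nonneg_of_monotoneOn {f : ℝ → ℝ} {s : Set ℝ} (hf : MonotoneOn f s)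
    {x y : ℝ} (hx : s ∈ nhds x) (hy : HasDerivAt f y x) : 0 ≤ y := by
  have h := hasDerivAt_iff_tendsto_slope.1 hy
  have h2 : Filter.Tendsto (slope f x) (nhdsWithin x (Set.Ioi x)) (nhds y) :=
    h.mono_left (nhdsWithin_mono x fun z hz => ne_of_gt hz)
  refine ge_of_tendsto h2 ?_
  filter_upwards [nhdsWithin_le_nhds hx, self_mem_nhdsWithin] with z hzs hz
  rw [slope_def_field]
  exact div_nonneg (sub_nonneg.2 (hf (mem_of_mem_nhds hx) hzs (le_of_lt hz)))
    (by simp only [Set.mem_Ioi] at hz; linarith)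

lemma sq_le_of_semilinear {e : ℝ → ℝ} (he : IsSemilinearDiagonal e) {x : ℝ}
    (hx : x ∈ Set.Ioc (0:ℝ) 1) : x ^ 2 ≤ e x := by
  have h := he.2.2 hx ⟨one_pos, le_rfl⟩ hx.2
  simp only [he.1.2.1, one_pow, div_one] at h
  have h2 := mul_le_mul_of_nonneg_right h (sq_nonneg x)
  rwa [one_mul, div_mul_cancel₀ _ (pow_ne_zero 2 (ne_of_gt hx.1))] at h2

lemma deriv_bounds {e : ℝ → ℝ} (he : IsSemilinearDiagonal e) {x ye : ℝ}
    (hx0 : 0 < x) (hx1 : x < 1) (hye : HasDerivAt e ye x) :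
    e x ≤ ye * x ∧ ye * x ≤ 2 * e x := by
  have hnb : Set.Ioc (0:ℝ) 1 ∈ nhds x :=
    Filter.mem_of_superset (isOpen_Ioo.mem_nhds ⟨hx0, hx1⟩) Set.Ioo_subset_Ioc_self
  constructor
  · have hq : HasDerivAt (fun z => e z / z) ((ye * x - e x * 1) / x ^ 2) x :=
      hye.div (hasDerivAt_id' (x := x)) (ne_of_gt hx0)
    have h0 := deriv_nonneg_of_monotoneOn he.2.1 hnb hq
    have h1 := mul_le_mul_of_nonneg_right h0 (sq_nonneg x)
    rw [zero_mul, div_mul_cancel₀ _ (pow_ne_zero 2 (ne_of_gt hx0))] at h1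
    linarith
  · have hq : HasDerivAt (fun z => -(e z / z ^ 2))
        (-((ye * x ^ 2 - e x * (↑(2:ℕ) * x ^ (2 - 1))) / (x ^ 2) ^ 2)) x :=
      (hye.div (hasDerivAt_pow 2 x) (pow_ne_zero 2 (ne_of_gt hx0))).neg
    have hmono : MonotoneOn (fun z => -(e z / z ^ 2)) (Set.Ioc (0:ℝ) 1) :=
      fun a ha b hb hab => neg_le_neg (he.2.2 ha hb hab)
    have h0 := deriv_nonneg_of_monotoneOn hmono hnb hq
    rw [neg_nonneg] at h0
    have h1 := mul_le_mul_of_nonneg_right h0 (sq_nonneg (x ^ 2))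
    rw [zero_mul, div_mul_cancel₀ _ (pow_ne_zero 2 (pow_ne_zero 2 (ne_of_gt hx0)))] at h1
    norm_num at h1
    nlinarith [hx0, mul_pos hx0 hx0]

lemma key_ftc {f : ℝ → ℝ} {K : ℝ≥0} (hm : Monotone f) (hl : LipschitzWith K f)
    {a b c : ℝ} (hab : a ≤ b) (hc : 0 ≤ c)
    (h : ∀ᵐ x, x ∈ Set.Ioo a b → ∀ y, HasDerivAt f y x → y = c) :
    f b - f a = c * (b - a) := by
  set st : StieltjesFunction ℝ := ⟨f, hm, fun x => hl.continuous.continuousWithinAt⟩ with hst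
  have hcoe : ⇑st = f := rfl
  set μ := st.measure with hμ
  have hlip : ∀ x y : ℝ, x ≤ y → f y - f x ≤ K * (y - x) := by
    intro x y hxy
    have h1 := hl.dist_le_mul y x
    rw [Real.dist_eq, Real.dist_eq, abs_of_nonneg (by linarith : (0:ℝ) ≤ y - x)] at h1
    exact (abs_le.1 h1).2.trans_eq rfl
  have hm2 : Monotone fun x => (K:ℝ) * x - f x := by
    intro x y hxy
    have := hlip x y hxy
    simp only
    linarith [hlip x y hxy]
  set st2 : StieltjesFunction ℝ := ⟨fun x => (K:ℝ) * x - f x, hm2,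
    fun x => ((continuous_const.mul continuous_id).sub hl.continuous).continuousWithinAt⟩
  have hsum : μ + st2.measure = (K : ℝ≥0∞) • volume := by
    have : IsLocallyFiniteMeasure (μ + st2.measure) := by
      constructor
      intro x
      obtain ⟨s, hs, h1⟩ := μ.finiteAt_nhds x
      obtain ⟨u, hu, h2⟩ := st2.measure.finiteAt_nhds x
      exact ⟨s ∩ u, Filter.inter_mem hs hu, by
        rw [Measure.add_apply]
        exact ENNReal.add_lt_top.2 ⟨lt_of_le_of_lt (measure_mono Set.inter_subset_left) h1,
          lt_of_le_of_lt (measure_mono Set.inter_subset_right) h2⟩⟩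
    refine Measure.ext_of_Ioc _ _ fun u v huv => ?_
    simp only [Measure.add_apply, hμ, st.measure_Ioc, st2.measure_Ioc, Measure.smul_apply,
      Real.volume_Ioc, smul_eq_mul, hcoe]
    rw [← ENNReal.ofReal_add (by simp [hm huv.le]) (by simp; linarith [hlip u v huv.le]),
      ← ENNReal.ofReal_coe_nnreal, ← ENNReal.ofReal_mul (by positivity)]
    congr 1; ring
  have hac : μ ≪ volume := by
    refine Measure.absolutelyContinuous_of_le_smul (c := (K : ℝ≥0∞)) ?_
    rw [← hsum]; exact Measure.le_add_right le_rfl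
  have hwd : volume.withDensity (μ.rnDeriv volume) = μ := Measure.withDensity_rnDeriv_eq _ _ hac
  have hrd : ∀ᵐ x, x ∈ Ioo a b → μ.rnDeriv volume x = ENNReal.ofReal c := by
    filter_upwards [st.ae_hasDerivAt, Measure.rnDeriv_lt_top μ volume, h] with x hx hlt hx2 hmem
    have := hx2 hmem _ (hcoe ▸ hx)
    rw [← ENNReal.ofReal_toReal hlt.ne, this]
  have hcalc : μ (Ioc a b) = ENNReal.ofReal c * ENNReal.ofReal (b - a) := by
    rw [← hwd, withDensity_apply _ measurableSet_Ioc,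
      ← Measure.restrict_congr_set Ioo_ae_eq_Ioc,
      setLIntegral_congr_fun_ae measurableSet_Ioo hrd, setLIntegral_const, Real.volume_Ioo]
  rw [hμ, st.measure_Ioc, hcoe, ← ENNReal.ofReal_mul hc] at hcalc
  have h1 : (0:ℝ) ≤ f b - f a := by linarith [hm hab]
  have h2 : (0:ℝ) ≤ c * (b - a) := mul_nonneg hc (by linarith)
  exact (ENNReal.ofReal_eq_ofReal_iff h1 h2).1 hcalc

lemma lipschitz_const_of_ae {f : ℝ → ℝ} {K : ℝ≥0} (hl : LipschitzWith K f)
    {a b : ℝ} (hab : a ≤ b)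
    (h : ∀ᵐ x, x ∈ Set.Ioo a b → ∀ y, HasDerivAt f y x → y = 0) : f b = f a := by
  set g : ℝ → ℝ := fun x => f x + (K:ℝ) * x with hg
  have hlipf : ∀ x y : ℝ, x ≤ y → |f y - f x| ≤ K * (y - x) := by
    intro x y hxy
    have h1 := hl.dist_le_mul y x
    rwa [Real.dist_eq, Real.dist_eq, abs_of_nonneg (by linarith : (0:ℝ) ≤ y - x)] at h1
  have hm : Monotone g := by
    intro x y hxy
    have := (abs_le.1 (hlipf x y hxy)).1
    simp only [hg]; linarith
  have hlg : LipschitzWith (K + K) g := by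
    refine LipschitzWith.of_dist_le_mul fun x y => ?_
    rw [Real.dist_eq, Real.dist_eq]
    rcases le_total x y with hxy | hxy
    · have := hlipf x y hxy
      have h2 : |x - y| = y - x := by rw [abs_sub_comm]; exact abs_of_nonneg (by linarith)
      rw [h2]
      have := abs_le.1 this
      rw [abs_le]; push_cast; constructor <;> simp only [hg] <;> nlinarith
    · have := hlipf y x hxy
      have h2 : |x - y| = x - y := abs_of_nonneg (by linarith)
      rw [h2]
      have := abs_le.1 this
      rw [abs_le]; push_cast; constructor <;> simp only [hg] <;> nlinarith
  have key := key_ftc hm hlg hab K.coe_nonneg ?_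
  · simp only [hg] at key; linarith [key]
  · filter_upwards [h] with x hx hmem y hy
    have hf' : HasDerivAt f (y - K) x := by
      have := hy.sub (((hasDerivAt_id x).const_mul (K:ℝ)))
      simp only [mul_one] at this
      have e : f = g - fun y : ℝ => (K:ℝ) * id y := by ext z; simp [hg]
      rw [e]; exact this
    have := hx hmem _ hf'
    linarith

theorem extreme_of_null_measure (d : ℝ → ℝ) (hd : IsSemilinearDiagonal d)
    (hnull : volume {x : ℝ | x ∈ Set.Ioc (0:ℝ) 1 ∧
      ∃ y : ℝ, HasDerivAt d y x ∧ 1 / x < y / d x ∧ y / d x < 2 / x} = 0) :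
    ∀ d₁ d₂ : ℝ → ℝ, IsSemilinearDiagonal d₁ → IsSemilinearDiagonal d₂ →
      (∀ x ∈ Set.Icc (0:ℝ) 1, d x = (d₁ x + d₂ x) / 2) →
      ∀ x ∈ Set.Icc (0:ℝ) 1, d₁ x = d₂ x := by
  intro d₁ d₂ h₁ h₂ havg
  have hkey : ∀ t : ℝ, 0 < t → t < 1 → d₁ t = d₂ t := by
    intro t ht0 ht1
    set c : ℝ → ℝ := fun z => max t (min z 1) with hc
    have hcmem : ∀ z, c z ∈ Set.Icc t 1 := fun z =>
      ⟨le_max_left _ _, max_le ht1.le (min_le_right _ _)⟩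
    have hcIoc : ∀ z, c z ∈ Set.Ioc (0:ℝ) 1 := fun z =>
      ⟨lt_of_lt_of_le ht0 (hcmem z).1, (hcmem z).2⟩
    have hcIcc : ∀ z, c z ∈ Set.Icc (0:ℝ) 1 := fun z =>
      ⟨le_of_lt (hcIoc z).1, (hcmem z).2⟩
    have hceq : ∀ z ∈ Set.Icc t 1, c z = z := fun z hz => by
      show max t (min z 1) = z
      rw [min_eq_left hz.2, max_eq_right hz.1]
    have hcdist : ∀ z w, |c z - c w| ≤ |z - w| := by
      intro z w
      have h1 := abs_max_sub_max_le_max t (min z 1) t (min w 1)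
      have h2 := abs_min_sub_min_le_max z 1 w 1
      simp only [sub_self, abs_zero] at h1 h2
      exact h1.trans (sup_le (abs_nonneg _) (h2.trans (sup_le le_rfl (abs_nonneg _))))
    set D : ℝ → ℝ := fun z => d (c z) with hDdef
    set D₁ : ℝ → ℝ := fun z => d₁ (c z) with hD1def
    set D₂ : ℝ → ℝ := fun z => d₂ (c z) with hD2def
    set R : ℝ → ℝ := fun z => (D₁ z - D₂ z) / D z with hRdef
    have ht2 : (0:ℝ) < t ^ 2 := by positivity
    have hDlb : ∀ z, t ^ 2 ≤ D z := fun z =>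
      (pow_le_pow_left₀ ht0.le (hcmem z).1 2).trans (sq_le_of_semilinear hd (hcIoc z))
    have hDub : ∀ z, D z ≤ 1 := fun z => (hd.1.2.2.2.1 _ (hcIcc z)).trans (hcmem z).2
    have hD1lb : ∀ z, 0 ≤ D₁ z := fun z =>
      le_trans (sq_nonneg _) (sq_le_of_semilinear h₁ (hcIoc z))
    have hD1ub : ∀ z, D₁ z ≤ 1 := fun z => (h₁.1.2.2.2.1 _ (hcIcc z)).trans (hcmem z).2
    have hD2lb : ∀ z, 0 ≤ D₂ z := fun z =>
      le_trans (sq_nonneg _) (sq_le_of_semilinear h₂ (hcIoc z))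
    have hD2ub : ∀ z, D₂ z ≤ 1 := fun z => (h₂.1.2.2.2.1 _ (hcIcc z)).trans (hcmem z).2
    have lip2 : ∀ (e : ℝ → ℝ), IsSemilinearDiagonal e →
        LipschitzWith 2 (fun z => e (c z)) := by
      intro e he
      refine LipschitzWith.of_dist_le_mul fun z w => ?_
      rw [Real.dist_eq, Real.dist_eq]
      have b1 := he.1.2.2.2.2 _ (hcIcc z) _ (hcIcc w)
      have b2 := hcdist z w
      push_cast
      linarith
    have hlipR : LipschitzWith (Real.toNNReal (8 / t ^ 4)) R := by
      refine LipschitzWith.of_dist_le_mul fun z w => ?_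
      rw [Real.dist_eq, Real.dist_eq, Real.coe_toNNReal _ (by positivity)]
      have hDz : (0:ℝ) < D z := lt_of_lt_of_le ht2 (hDlb z)
      have hDw : (0:ℝ) < D w := lt_of_lt_of_le ht2 (hDlb w)
      have e1 : R z - R w = (((D₁ z - D₂ z) - (D₁ w - D₂ w)) * D w
          + (D₁ w - D₂ w) * (D w - D z)) / (D z * D w) := by
        rw [hRdef]
        field_simp
        ring
      rw [e1, abs_div]
      have a1 : |D₁ z - D₁ w| ≤ 2 * |z - w| := by
        have := (lip2 d₁ h₁).dist_le_mul z w
        rw [Real.dist_eq, Real.dist_eq] at this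
        push_cast at this
        linarith
      have a2 : |D₂ z - D₂ w| ≤ 2 * |z - w| := by
        have := (lip2 d₂ h₂).dist_le_mul z w
        rw [Real.dist_eq, Real.dist_eq] at this
        push_cast at this
        linarith
      have a3 : |D w - D z| ≤ 2 * |z - w| := by
        have := (lip2 d hd).dist_le_mul w z
        rw [Real.dist_eq, Real.dist_eq, abs_sub_comm w z] at this
        push_cast at this
        linarith
      have b1 : |(D₁ z - D₂ z) - (D₁ w - D₂ w)| ≤ 4 * |z - w| := by
        have e2 : (D₁ z - D₂ z) - (D₁ w - D₂ w) = (D₁ z - D₁ w) - (D₂ z - D₂ w) := by ring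
        rw [e2]
        exact (abs_sub _ _).trans (by linarith)
      have b2 : |D₁ w - D₂ w| ≤ 2 := by
        rw [abs_le]
        constructor <;> linarith [hD1lb w, hD1ub w, hD2lb w, hD2ub w]
      have hnum : |((D₁ z - D₂ z) - (D₁ w - D₂ w)) * D w + (D₁ w - D₂ w) * (D w - D z)|
          ≤ 8 * |z - w| := by
        calc |((D₁ z - D₂ z) - (D₁ w - D₂ w)) * D w + (D₁ w - D₂ w) * (D w - D z)|
            ≤ |(D₁ z - D₂ z) - (D₁ w - D₂ w)| * |D w| + |D₁ w - D₂ w| * |D w - D z| := by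
              refine (abs_add_le _ _).trans ?_
              rw [abs_mul, abs_mul]
          _ ≤ (4 * |z - w|) * 1 + 2 * (2 * |z - w|) := by
              have hDwa : |D w| ≤ 1 := abs_le.2 ⟨by linarith [hDlb w], hDub w⟩
              have m1 := mul_le_mul b1 hDwa (abs_nonneg _) (by positivity)
              have m2 := mul_le_mul b2 a3 (abs_nonneg _) (by norm_num)
              linarith
          _ ≤ 8 * |z - w| := by linarith [abs_nonneg (z - w)]
      have hden : t ^ 4 ≤ |D z * D w| := by
        rw [abs_of_pos (mul_pos hDz hDw)]
        nlinarith [hDlb z, hDlb w]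
      calc |((D₁ z - D₂ z) - (D₁ w - D₂ w)) * D w + (D₁ w - D₂ w) * (D w - D z)| / |D z * D w|
          ≤ (8 * |z - w|) / t ^ 4 := div_le_div₀ (by positivity) hnum (by positivity) hden
        _ = 8 / t ^ 4 * |z - w| := by ring
    have hns : ∀ᵐ x, x ∉ {x : ℝ | x ∈ Set.Ioc (0:ℝ) 1 ∧
        ∃ y : ℝ, HasDerivAt d y x ∧ 1 / x < y / d x ∧ y / d x < 2 / x} :=
      measure_eq_zero_iff_ae_notMem.1 hnull
    have hae : ∀ᵐ x, x ∈ Set.Ioo t 1 → ∀ r, HasDerivAt R r x → r = 0 := by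
      filter_upwards [hns, (lip2 d₁ h₁).ae_differentiableAt,
        (lip2 d₂ h₂).ae_differentiableAt] with x hx hdiff1 hdiff2 hmem r hr
      obtain ⟨hxt, hxlt1⟩ := hmem
      have hx0 : (0:ℝ) < x := ht0.trans hxt
      have hxIoc : x ∈ Set.Ioc (0:ℝ) 1 := ⟨hx0, hxlt1.le⟩
      have hnbt : Set.Ioo t 1 ∈ nhds x := isOpen_Ioo.mem_nhds ⟨hxt, hxlt1⟩
      have heq1 : D₁ =ᶠ[nhds x] d₁ := Filter.eventuallyEq_of_mem hnbt fun z hz => by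
        show d₁ (c z) = d₁ z
        rw [hceq z ⟨hz.1.le, hz.2.le⟩]
      have heq2 : D₂ =ᶠ[nhds x] d₂ := Filter.eventuallyEq_of_mem hnbt fun z hz => by
        show d₂ (c z) = d₂ z
        rw [hceq z ⟨hz.1.le, hz.2.le⟩]
      have heqR : R =ᶠ[nhds x] fun z => (d₁ z - d₂ z) / d z :=
        Filter.eventuallyEq_of_mem hnbt fun z hz => by
          show (d₁ (c z) - d₂ (c z)) / d (c z) = _
          rw [hceq z ⟨hz.1.le, hz.2.le⟩]
      set y₁ := deriv D₁ x with hy1def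
      set y₂ := deriv D₂ x with hy2def
      have hd1x : HasDerivAt d₁ y₁ x := heq1.hasDerivAt_iff.1 hdiff1.hasDerivAt
      have hd2x : HasDerivAt d₂ y₂ x := heq2.hasDerivAt_iff.1 hdiff2.hasDerivAt
      have havg' : (fun z => (d₁ z + d₂ z) / 2) =ᶠ[nhds x] d :=
        Filter.eventuallyEq_of_mem hnbt fun z hz =>
          (havg z ⟨(ht0.trans hz.1).le, hz.2.le⟩).symm
      have hdx : HasDerivAt d ((y₁ + y₂) / 2) x :=
        havg'.hasDerivAt_iff.1 ((hd1x.add hd2x).div_const 2)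
      have hA := deriv_bounds h₁ hx0 hxlt1 hd1x
      have hB := deriv_bounds h₂ hx0 hxlt1 hd2x
      have hd1pos : (0:ℝ) < d₁ x :=
        lt_of_lt_of_le (by positivity) (sq_le_of_semilinear h₁ hxIoc)
      have hd2pos : (0:ℝ) < d₂ x :=
        lt_of_lt_of_le (by positivity) (sq_le_of_semilinear h₂ hxIoc)
      have hdpos : (0:ℝ) < d x :=
        lt_of_lt_of_le (by positivity) (sq_le_of_semilinear hd hxIoc)
      have hdeq : d x = (d₁ x + d₂ x) / 2 := havg x ⟨hx0.le, hxlt1.le⟩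
      have hnot : ¬ (1 / x < ((y₁ + y₂) / 2) / d x ∧ ((y₁ + y₂) / 2) / d x < 2 / x) :=
        fun hcon => hx ⟨hxIoc, ⟨(y₁ + y₂) / 2, hdx, hcon.1, hcon.2⟩⟩
      have hk : ∃ k : ℝ, y₁ * x = k * d₁ x ∧ y₂ * x = k * d₂ x := by
        rcases not_and_or.1 hnot with h | h
        · rw [not_lt, div_le_div_iff₀ hdpos hx0] at h
          exact ⟨1, by linarith [hA.1, hB.1], by linarith [hA.1, hB.1]⟩
        · rw [not_lt, div_le_div_iff₀ hx0 hdpos] at h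
          exact ⟨2, by linarith [hA.2, hB.2], by linarith [hA.2, hB.2]⟩
      obtain ⟨k, hk1, hk2⟩ := hk
      have hRd : HasDerivAt (fun z => (d₁ z - d₂ z) / d z) r x := heqR.hasDerivAt_iff.1 hr
      have hRd2 : HasDerivAt (fun z => (d₁ z - d₂ z) / d z)
          (((y₁ - y₂) * d x - (d₁ x - d₂ x) * ((y₁ + y₂) / 2)) / d x ^ 2) x :=
        (hd1x.sub hd2x).div hdx (ne_of_gt hdpos)
      have hre := hRd.unique hRd2
      rw [hre, div_eq_zero_iff]
      left
      have hy1 : y₁ = k * d₁ x / x := by rw [eq_div_iff (ne_of_gt hx0)]; linarith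
      have hy2 : y₂ = k * d₂ x / x := by rw [eq_div_iff (ne_of_gt hx0)]; linarith
      rw [hy1, hy2, hdeq]
      field_simp
      ring
    have hfin := lipschitz_const_of_ae hlipR ht1.le hae
    have hct : c t = t := hceq t ⟨le_rfl, ht1.le⟩
    have hc1 : c 1 = 1 := hceq 1 ⟨ht1.le, le_rfl⟩
    have hR1 : R 1 = 0 := by
      show (d₁ (c 1) - d₂ (c 1)) / d (c 1) = 0
      rw [hc1, h₁.1.2.1, h₂.1.2.1, hd.1.2.1]
      norm_num
    have hRt : R t = (d₁ t - d₂ t) / d t := by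
      show (d₁ (c t) - d₂ (c t)) / d (c t) = _
      rw [hct]
    rw [hR1, hRt] at hfin
    have hdtpos : (0:ℝ) < d t :=
      lt_of_lt_of_le (by positivity) (sq_le_of_semilinear hd ⟨ht0, ht1.le⟩)
    rcases div_eq_zero_iff.1 hfin.symm with h | h
    · linarith
    · exact absurd h (ne_of_gt hdtpos)
  intro x hx
  rcases eq_or_lt_of_le hx.1 with h0 | h0
  · rw [← h0, h₁.1.1, h₂.1.1]
  · rcases eq_or_lt_of_le hx.2 with h1 | h1
    · rw [h1, h₁.1.2.1, h₂.1.2.1]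
    · exact hkey x h0 h1
end

section
/- For m ∈ [0,1], the lower semilinear copula C_{δ_m} generated by δ_m(t) = max(m·t, t²) has Spearman's rho equal to m⁴, i.e., 12·∫₀¹∫₀¹ C_{δ_m}(u,v) du dv − 3 = m⁴. -/
/-- The lower semilinear construction (note `0/0 = 0` in Lean). -/
noncomputable def semilinear (d : ℝ → ℝ) (u v : ℝ) : ℝ :=
  min u v * d (max u v) / max u v

open intervalIntegral Set

lemma poly_int (a b c0 c1 c2 c3 : ℝ) :
    ∫ x in a..b, (c0 + c1*x + c2*x^2 + c3*x^3) =
      (c0*b + c1*b^2/2 + c2*b^3/3 + c3*b^4/4) - (c0*a + c1*a^2/2 + c2*a^3/3 + c3*a^4/4) := by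
  have key : ∀ x ∈ Set.uIcc a b,
      HasDerivAt (fun x => c0*x + c1*x^2/2 + c2*x^3/3 + c3*x^4/4)
        (c0 + c1*x + c2*x^2 + c3*x^3) x := by
    intro x _
    have h0 : HasDerivAt (fun x : ℝ => c0*x) c0 x := by
      simpa using (hasDerivAt_id x).const_mul c0
    have h1 : HasDerivAt (fun x : ℝ => c1*x^2/2) (c1*x) x := by
      have := ((hasDerivAt_pow 2 x).const_mul c1).div_const 2
      exact this.congr_deriv (by push_cast; ring)
    have h2 : HasDerivAt (fun x : ℝ => c2*x^3/3) (c2*x^2) x := by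
      have := ((hasDerivAt_pow 3 x).const_mul c2).div_const 3
      exact this.congr_deriv (by push_cast; ring)
    have h3 : HasDerivAt (fun x : ℝ => c3*x^4/4) (c3*x^3) x := by
      have := ((hasDerivAt_pow 4 x).const_mul c3).div_const 4
      exact this.congr_deriv (by push_cast; ring)
    exact ((h0.add h1).add h2).add h3
  rw [integral_eq_sub_of_hasDerivAt key (by apply Continuous.intervalIntegrable; continuity)]


section main
variable (m : ℝ)

noncomputable def dd : ℝ → ℝ := fun t => max (m * t) (t ^ 2)

lemma dd_cont : Continuous (dd m) := by unfold dd; continuity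

lemma dd_div (t : ℝ) (ht : 0 < t) : dd m t / t = max m t := by
  unfold dd
  rw [div_eq_iff ht.ne', max_mul_of_nonneg _ _ ht.le]
  ring_nf

/-- the inner-integrand is continuous in `v` for fixed `u > 0` -/
lemma semi_cont (u : ℝ) (hu : 0 < u) : Continuous (fun v => semilinear (dd m) u v) := by
  unfold semilinear
  apply Continuous.div
  · exact (continuous_const.min continuous_id).mul ((dd_cont m).comp (continuous_const.max continuous_id))
  · exact continuous_const.max continuous_id
  · intro v; exact ne_of_gt (lt_of_lt_of_le hu (le_max_left _ _))

lemma inner_eval (hm0 : 0 ≤ m) (hm1 : m ≤ 1) (u : ℝ) (hu0 : 0 ≤ u) (hu1 : u ≤ 1) :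
    (∫ v in (0:ℝ)..1, semilinear (dd m) u v) =
      if u ≤ m then m^2*u - m*u^2/2 + u*(1-m^2)/2 else u/2 := by
  rcases eq_or_lt_of_le hu0 with rfl | hu
  · have h0 : (∫ v in (0:ℝ)..1, semilinear (dd m) 0 v) = ∫ v in (0:ℝ)..1, (0:ℝ) := by
      apply integral_congr
      intro v hv
      rw [uIcc_of_le (by norm_num)] at hv
      simp [semilinear, min_eq_left hv.1]
    rw [h0]
    simp [hm0]
  · have hcont := semi_cont m u hu
    have hsplit : (∫ v in (0:ℝ)..1, semilinear (dd m) u v) =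
        (∫ v in (0:ℝ)..u, semilinear (dd m) u v) + ∫ v in u..1, semilinear (dd m) u v :=
      (integral_add_adjacent_intervals (hcont.intervalIntegrable _ _)
        (hcont.intervalIntegrable _ _)).symm
    have hleft : (∫ v in (0:ℝ)..u, semilinear (dd m) u v) = max m u * u^2/2 := by
      have : (∫ v in (0:ℝ)..u, semilinear (dd m) u v) = ∫ v in (0:ℝ)..u, max m u * v := by
        apply integral_congr
        intro v hv
        rw [uIcc_of_le hu0] at hv
        unfold semilinear
        rw [min_eq_right hv.2, max_eq_left hv.2, mul_div_assoc, dd_div m u hu, mul_comm]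
      rw [this, integral_const_mul]
      simp; ring
    have hright : (∫ v in u..1, semilinear (dd m) u v) = ∫ v in u..1, u * max m v := by
      apply integral_congr
      intro v hv
      rw [uIcc_of_le hu1] at hv
      unfold semilinear
      rw [min_eq_left hv.1, max_eq_right hv.1, mul_div_assoc,
        dd_div m v (lt_of_lt_of_le hu hv.1)]
    by_cases hum : u ≤ m
    · have hmax : max m u = m := max_eq_left hum
      have h2 : (∫ v in u..1, u * max m v) =
          (∫ v in u..m, u * m) + ∫ v in m..1, u * v := by
        have hc : Continuous fun v : ℝ => u * max m v :=
          continuous_const.mul (continuous_const.max continuous_id)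
        rw [← integral_add_adjacent_intervals (a := u) (b := m) (c := 1)
          (hc.intervalIntegrable _ _) (hc.intervalIntegrable _ _)]
        congr 1
        · apply integral_congr; intro v hv
          rw [uIcc_of_le hum] at hv
          show u * max m v = u * m
          rw [max_eq_left hv.2]
        · apply integral_congr; intro v hv
          rw [uIcc_of_le hm1] at hv
          show u * max m v = u * v
          rw [max_eq_right hv.1]
      have e1 : (∫ v in u..m, u * m) = u * m * (m - u) := by
        rw [integral_const, smul_eq_mul]; ring
      have e2 : (∫ v in m..1, u * v) = u * ((1 - m^2)/2) := by
        rw [integral_const_mul, integral_id]; ring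
      rw [hsplit, hleft, hright, h2, e1, e2, hmax, if_pos hum]
      ring
    · push_neg at hum
      have h2 : (∫ v in u..1, u * max m v) = ∫ v in u..1, u * v := by
        apply integral_congr; intro v hv
        rw [uIcc_of_le hu1] at hv
        show u * max m v = u * v
        rw [max_eq_right (le_trans hum.le hv.1)]
      rw [hsplit, hleft, hright, h2, integral_const_mul, integral_id,
        max_eq_right hum.le, if_neg (not_le.mpr hum)]
      ring

theorem spearman_rho_deltam_aux (hm : m ∈ Set.Icc (0:ℝ) 1) :
    12 * (∫ u in (0:ℝ)..1, ∫ v in (0:ℝ)..1,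
      semilinear (fun t => max (m * t) (t ^ 2)) u v) - 3 = m ^ 4 := by
  obtain ⟨hm0, hm1⟩ := hm
  have hG : (∫ u in (0:ℝ)..1, ∫ v in (0:ℝ)..1, semilinear (fun t => max (m * t) (t ^ 2)) u v)
      = ∫ u in (0:ℝ)..1, (if u ≤ m then m^2*u - m*u^2/2 + u*(1-m^2)/2 else u/2) := by
    apply integral_congr
    intro u hu
    rw [uIcc_of_le (by norm_num)] at hu
    exact inner_eval m hm0 hm1 u hu.1 hu.2
  rw [hG]
  set G : ℝ → ℝ := fun u => if u ≤ m then m^2*u - m*u^2/2 + u*(1-m^2)/2 else u/2 with hGdef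
  have pA : Continuous fun u : ℝ => m^2*u - m*u^2/2 + u*(1-m^2)/2 := by continuity
  have pB : Continuous fun u : ℝ => u/2 := by continuity
  have hGA : IntervalIntegrable G MeasureTheory.volume 0 m := by
    apply (pA.intervalIntegrable 0 m).congr
    intro u hu
    rw [uIoc_of_le hm0] at hu
    simp [hGdef, hu.2]
  have hGB : IntervalIntegrable G MeasureTheory.volume m 1 := by
    apply (pB.intervalIntegrable m 1).congr
    intro u hu
    rw [uIoc_of_le hm1] at hu
    simp [hGdef, not_le.mpr hu.1]
  rw [← integral_add_adjacent_intervals hGA hGB]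
  have eA : (∫ u in (0:ℝ)..m, G u) = m^4/12 + m^2/4 := by
    have : (∫ u in (0:ℝ)..m, G u) =
        ∫ u in (0:ℝ)..m, ((0:ℝ) + (m^2 + (1-m^2)/2)*u + (-(m/2))*u^2 + 0*u^3) := by
      apply integral_congr
      intro u hu
      rw [uIcc_of_le hm0] at hu
      simp only [hGdef, if_pos hu.2]
      ring
    rw [this, poly_int]
    ring
  have eB : (∫ u in m..1, G u) = (1 - m^2)/4 := by
    have : (∫ u in m..1, G u) =
        ∫ u in m..1, ((0:ℝ) + (1/2)*u + 0*u^2 + 0*u^3) := by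
      apply integral_congr
      intro u hu
      rw [uIcc_of_le hm1] at hu
      rcases eq_or_lt_of_le hu.1 with rfl | h
      · simp [hGdef]; ring
      · simp only [hGdef, if_neg (not_le.mpr h)]; ring
    rw [this, poly_int]
    ring
  rw [eA, eB]
  ring
end main

theorem spearman_rho_deltam (m : ℝ) (hm : m ∈ Set.Icc (0:ℝ) 1) :
    12 * (∫ u in (0:ℝ)..1, ∫ v in (0:ℝ)..1,
      semilinear (fun t => max (m * t) (t ^ 2)) u v) - 3 = m ^ 4 :=
  spearman_rho_deltam_aux m hm
end

section
/- Let C_δ be a lower semilinear copula with diagonal δ, and let (u,v) ∈ [0,1]² with v ≤ u ≤ 1−v. Then (1−u−v)(1−v) ≤ C_δ(1−v,1−u) − C_δ(u,v) ≤ 1 − u − uv/(1−v). -/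
/-!
Write `φ x = d x / x`. Both copula values are `min * φ (max)`, so the difference is
`(1 - u) φ(1 - v) - v φ(u)`. Monotonicity of `φ` and the bound `φ ≥ id` (from `d x / x² ≥ d 1 = 1`)
give the lower bound; the bound `φ(u) ≥ u φ(1 - v) / (1 - v)` (from antitonicity of `d x / x²`)
and `φ ≤ 1` give the upper bound, since `1 - u - u v / (1 - v) = (1 - u - v) / (1 - v) ≥ 0`.
-/

lemma semilinear_of_le (d : ℝ → ℝ) {u v : ℝ} (h : v ≤ u) :
    semilinear d u v = v * (d u / u) := by
  rw [semilinear, min_eq_right h, max_eq_left h, mul_div_assoc]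

lemma IsDiagonal.div_le_one {d : ℝ → ℝ} (hd : IsDiagonal d) {x : ℝ} (hx : x ∈ Set.Icc (0:ℝ) 1) :
    d x / x ≤ 1 :=
  div_le_one_of_le₀ (hd.2.2.2.1 x hx) hx.1

namespace IsSemilinearDiagonal

variable {d : ℝ → ℝ} (hd : IsSemilinearDiagonal d)
include hd

lemma le_div {x : ℝ} (hx : x ∈ Set.Ioc (0:ℝ) 1) : x ≤ d x / x := by
  have h : d 1 / 1 ^ 2 ≤ d x / x ^ 2 := hd.2.2 hx ⟨one_pos, le_rfl⟩ hx.2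
  rw [hd.1.2.1, one_pow, div_one, le_div_iff₀ (by positivity [hx.1])] at h
  rw [le_div_iff₀ hx.1]
  nlinarith

lemma div_le_div_of_le {x y : ℝ} (hx : 0 ≤ x) (hy : y ∈ Set.Ioc (0:ℝ) 1) (hxy : x ≤ y) :
    d x / x ≤ d y / y := by
  rcases hx.eq_or_lt with rfl | hx
  · rw [div_zero]
    exact hy.1.le.trans (hd.le_div hy)
  · exact hd.2.1 ⟨hx, hxy.trans hy.2⟩ hy hxy

lemma mul_div_le_div_of_le {x y : ℝ} (hx : 0 ≤ x) (hy : y ∈ Set.Ioc (0:ℝ) 1) (hxy : x ≤ y) :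
    x / y * (d y / y) ≤ d x / x := by
  rcases hx.eq_or_lt with rfl | hx
  · simp
  have h : d y / y ^ 2 ≤ d x / x ^ 2 := hd.2.2 ⟨hx, hxy.trans hy.2⟩ hy hxy
  calc x / y * (d y / y) = x * (d y / y ^ 2) := by ring
    _ ≤ x * (d x / x ^ 2) := mul_le_mul_of_nonneg_left h hx.le
    _ = d x / x := by field_simp

end IsSemilinearDiagonal

theorem opposite_diagonal_asymmetry_bounds_general (d : ℝ → ℝ) (hd : IsSemilinearDiagonal d)
    (u v : ℝ) (hv : v ∈ Set.Icc (0:ℝ) 1)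
    (hvu : v ≤ u) (huv : u ≤ 1 - v) :
    (1 - u - v) * (1 - v) ≤ semilinear d (1 - v) (1 - u) - semilinear d u v ∧
    semilinear d (1 - v) (1 - u) - semilinear d u v ≤ 1 - u - u * v / (1 - v) := by
  have hv0 := hv.1
  have hpos : 0 < 1 - v := by linarith
  have hmem : 1 - v ∈ Set.Ioc (0:ℝ) 1 := ⟨hpos, by linarith⟩
  rw [semilinear_of_le d (by linarith : 1 - u ≤ 1 - v), semilinear_of_le d hvu]
  have hmono := hd.div_le_div_of_le (hv0.trans hvu) hmem huv
  have hdecay := hd.mul_div_le_div_of_le (hv0.trans hvu) hmem huv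
  have hgap : 1 - u - u * v / (1 - v) = (1 - u - v) / (1 - v) := by field_simp; ring
  constructor
  · calc (1 - u - v) * (1 - v) ≤ (1 - u - v) * (d (1 - v) / (1 - v)) :=
          mul_le_mul_of_nonneg_left (hd.le_div hmem) (by linarith)
      _ ≤ (1 - u) * (d (1 - v) / (1 - v)) - v * (d u / u) := by
          nlinarith [mul_le_mul_of_nonneg_left hmono hv0]
  · calc (1 - u) * (d (1 - v) / (1 - v)) - v * (d u / u)
        ≤ (1 - u) * (d (1 - v) / (1 - v)) - v * (u / (1 - v) * (d (1 - v) / (1 - v))) :=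
          sub_le_sub_left (mul_le_mul_of_nonneg_left hdecay hv0) _
      _ = (1 - u - u * v / (1 - v)) * (d (1 - v) / (1 - v)) := by ring
      _ ≤ 1 - u - u * v / (1 - v) :=
          mul_le_of_le_one_right (hgap ▸ div_nonneg (by linarith) hpos.le)
            (hd.1.div_le_one ⟨hpos.le, hmem.2⟩)

theorem opposite_diagonal_asymmetry_bounds (d : ℝ → ℝ) (hd : IsSemilinearDiagonal d)
    (u v : ℝ) (hu : u ∈ Set.Icc (0:ℝ) 1) (hv : v ∈ Set.Icc (0:ℝ) 1)
    (hvu : v ≤ u) (huv : u ≤ 1 - v) :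
    (1 - u - v) * (1 - v) ≤ semilinear d (1 - v) (1 - u) - semilinear d u v ∧
    semilinear d (1 - v) (1 - u) - semilinear d u v ≤ 1 - u - u * v / (1 - v) :=
  opposite_diagonal_asymmetry_bounds_general d hd u v hv hvu huv
end

section
/- Let C_δ be a lower semilinear copula with diagonal δ, and let (u,v) ∈ [0,1]² with v ≤ u ≤ 1−v. Then |C_δ(1−u,1−v) − C_δ(u,v) − 1 + u + v| ≤ (1−u−v)·v/(1−v). -/
theorem radial_asymmetry_bound (d : ℝ → ℝ) (hd : IsSemilinearDiagonal d)
    (u v : ℝ) (hu : u ∈ Set.Icc (0:ℝ) 1) (hv : v ∈ Set.Icc (0:ℝ) 1)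
    (hvu : v ≤ u) (huv : u ≤ 1 - v) :
    |semilinear d (1 - u) (1 - v) - semilinear d u v - 1 + u + v| ≤
      (1 - u - v) * v / (1 - v) := by
  obtain ⟨⟨h0, h1, hmono, hle, hlip⟩, hg, hh⟩ := hd
  rcases eq_or_lt_of_le hu.1 with hu0 | hu0
  · -- u = 0, hence v = 0
    have hv0 : v = 0 := le_antisymm (hu0 ▸ hvu) hv.1
    subst hv0
    rw [← hu0]
    norm_num [semilinear, h1]
  · -- main case: 0 < u
    have hA : (0:ℝ) < 1 - v := lt_of_lt_of_le hu0 huv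
    have hA1 : 1 - v ≤ 1 := by linarith [hv.1]
    have h1uv : (0:ℝ) ≤ 1 - u - v := by linarith
    have hmemu : u ∈ Set.Ioc (0:ℝ) 1 := ⟨hu0, hu.2⟩
    have hmemA : (1 - v) ∈ Set.Ioc (0:ℝ) 1 := ⟨hA, hA1⟩
    have hmem1 : (1:ℝ) ∈ Set.Ioc (0:ℝ) 1 := ⟨one_pos, le_refl 1⟩
    -- key facts about d
    have hda_le : d (1 - v) ≤ 1 - v := hle (1 - v) ⟨by linarith, hA1⟩
    have h2' : d 1 / 1 ^ 2 ≤ d (1 - v) / (1 - v) ^ 2 := hh hmemA hmem1 hA1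
    have h2 : (1 - v) ^ 2 ≤ d (1 - v) := by
      rw [h1] at h2'
      norm_num at h2'
      exact (one_le_div (by positivity)).mp h2'
    have h3' : d (1 - v) / (1 - v) ^ 2 ≤ d u / u ^ 2 := hh hmemu hmemA huv
    have h3 : d (1 - v) * u ^ 2 ≤ d u * (1 - v) ^ 2 :=
      (div_le_div_iff₀ (by positivity) (by positivity)).mp h3'
    have h4' : d u / u ≤ d (1 - v) / (1 - v) := hg hmemu hmemA huv
    have h4 : d u * (1 - v) ≤ d (1 - v) * u :=
      (div_le_div_iff₀ hu0 hA).mp h4'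
    -- compute the two semilinear values
    have e1 : semilinear d (1 - u) (1 - v)
        = (1 - u) * d (1 - v) / (1 - v) := by
      unfold semilinear
      rw [min_eq_left (by linarith), max_eq_right (by linarith : 1 - u ≤ 1 - v)]
    have e2 : semilinear d u v = v * d u / u := by
      unfold semilinear
      rw [min_eq_right hvu, max_eq_left hvu]
    rw [e1, e2]
    have key : (1 - u) * d (1 - v) / (1 - v) - v * d u / u - 1 + u + v
        = ((1 - u) * d (1 - v) * u - v * d u * (1 - v) - (1 - u - v) * u * (1 - v))
            / (u * (1 - v)) := by
      field_simp
      ring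
    rw [key, abs_div, abs_of_pos (by positivity : (0:ℝ) < u * (1 - v)),
      div_le_iff₀ (by positivity : (0:ℝ) < u * (1 - v))]
    have hrhs : (1 - u - v) * v / (1 - v) * (u * (1 - v)) = (1 - u - v) * v * u := by
      field_simp
    rw [hrhs, abs_le]
    constructor
    · nlinarith [mul_nonneg hv.1 (sub_nonneg.2 h3),
        mul_nonneg (mul_nonneg hu0.le h1uv) (sub_nonneg.2 hda_le), hA, hv.1,
        mul_nonneg hv.1 (sub_nonneg.2 h4)]
    · nlinarith [mul_nonneg hv.1 (sub_nonneg.2 h3),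
        mul_nonneg (mul_nonneg hu0.le h1uv) (sub_nonneg.2 hda_le), hA, hv.1,
        mul_nonneg hv.1 (sub_nonneg.2 h4),
        mul_nonneg (mul_nonneg hu0.le h1uv) (by nlinarith : (0:ℝ) ≤ d (1 - v) - (1 - 2*v))]
end
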